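/- arXiv:2206.09001 — 4 statements merged into one kernel-verified Lean document; each statement's English description precedes it below -/
import Mathlib

section
/- Let e ∈ ℝⁿ be a unit vector, R > 0, ε > 0, and σ, τ > 0 with σ + τ ≠ 1. Let u : ℝⁿ → ℝ be bounded on B_{2R} and let K ≥ ‖u‖_{L∞(B_{2R})}. Suppose there is C₀ > 0 such that |u_h^σ(x + eh) − u_h^σ(x)| ≤ C₀·K·((|h|/R)^τ + (ε/R)^τ) for every x ∈ B_{R/4} and every h with 0 < |h| < R/8. Then there exists a constant C > 0, depending only on C₀, σ and τ, such that |u(x + he) − u(x)| ≤ C·K·((|h|/R)^ξ + (ε/R)^{σ+τ}) for every x ∈ B_{R/8} and every h with 0 < |h| < R/8, where ξ = min{1, σ + τ}. -/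
open MeasureTheory Metric Filter Topology

noncomputable section

abbrev En (n : ℕ) := EuclideanSpace ℝ (Fin n)

/-- A bounded Borel measurable function. -/
def BddBorel {n : ℕ} (u : En n → ℝ) : Prop :=
  Measurable u ∧ ∃ M : ℝ, ∀ x, |u x| ≤ M

/-- Second difference `δu(x,y) = u(x+y) + u(x-y) - 2u(x)`. -/
def deltaU {n : ℕ} (u : En n → ℝ) (x y : En n) : ℝ :=
  u (x + y) + u (x - y) - 2 * u x

/-- The extremal operator `L⁺_ε`. -/
def Lplus {n : ℕ} (Λ α β ε : ℝ) (u : En n → ℝ) (x : En n) : ℝ :=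
  (1 / (2 * ε ^ 2)) *
    (α * sSup ((fun ν => deltaU u x (ε • ν)) '' ball (0 : En n) Λ) +
      β * ⨍ y in ball (0 : En n) 1, deltaU u x (ε • y))

/-- The extremal operator `L⁻_ε`. -/
def Lminus {n : ℕ} (Λ α β ε : ℝ) (u : En n → ℝ) (x : En n) : ℝ :=
  (1 / (2 * ε ^ 2)) *
    (α * sInf ((fun ν => deltaU u x (ε • ν)) '' ball (0 : En n) Λ) +
      β * ⨍ y in ball (0 : En n) 1, deltaU u x (ε • y))

/-- `L∞` norm of `u` on a set `s`. -/
def supNormOn {n : ℕ} (u : En n → ℝ) (s : Set (En n)) : ℝ :=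
  sSup ((fun x => |u x|) '' s)

/-- (H1): uniform ellipticity of an operator `L`. -/
def EllipticH1 {n : ℕ} (Λ α β ε : ℝ) (L : (En n → ℝ) → En n → ℝ) : Prop :=
  ∀ u v : En n → ℝ, BddBorel u → BddBorel v → ∀ x : En n,
    Lminus Λ α β ε v x ≤ L (u + v) x - L u x ∧ L (u + v) x - L u x ≤ Lplus Λ α β ε v x

/-- An admissible operator: (H1) uniform ellipticity, (H2) translation invariance,
and the normalization `L 0 = 0`. -/
def IsAdmissible {n : ℕ} (Λ α β ε : ℝ) (L : (En n → ℝ) → En n → ℝ) : Prop :=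
  EllipticH1 Λ α β ε L ∧
    (∀ u : En n → ℝ, BddBorel u → ∀ x y : En n, L (fun z => u (z + y)) x = L u (x + y)) ∧
    (∀ x : En n, L (fun _ => 0) x = 0)

/-- The difference quotient `u_h^σ(x) = R^σ (u(x+he) - u(x)) / (|h|^σ + ε^σ)`. -/
def diffQuot {n : ℕ} (u : En n → ℝ) (e : En n) (ε σ R h : ℝ) (x : En n) : ℝ :=
  R ^ σ * (u (x + h • e) - u x) / (|h| ^ σ + ε ^ σ)

/-- The discrete gradient `∇^ε u (x)`. -/
def discGrad {n : ℕ} (ε : ℝ) (u : En n → ℝ) (x : En n) : En n :=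
  ∑ i : Fin n,
    ((u (x + ε • EuclideanSpace.single i (1 : ℝ)) - u x) / ε) • EuclideanSpace.single i (1 : ℝ)

end


private lemma young_aux {a b s t : ℝ} (ha : 0 ≤ a) (hb : 0 ≤ b) (hs : 0 < s) (ht : 0 < t) :
    a ^ t * b ^ s ≤ a ^ (s + t) + b ^ (s + t) := by
  have hst : s + t ≠ 0 := by positivity
  rcases le_total a b with hab | hab
  · have h1 : a ^ t * b ^ s ≤ b ^ t * b ^ s :=
      mul_le_mul_of_nonneg_right (Real.rpow_le_rpow ha hab ht.le) (Real.rpow_nonneg hb s)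
    have h2 : b ^ (s + t) = b ^ s * b ^ t := Real.rpow_add' hb hst
    nlinarith [Real.rpow_nonneg ha (s + t)]
  · have h1 : a ^ t * b ^ s ≤ a ^ t * a ^ s :=
      mul_le_mul_of_nonneg_left (Real.rpow_le_rpow hb hab hs.le) (Real.rpow_nonneg ha t)
    have h2 : a ^ (s + t) = a ^ s * a ^ t := Real.rpow_add' ha hst
    nlinarith [Real.rpow_nonneg hb (s + t)]

private lemma half_sum_le (m : ℕ) : ∑ j ∈ Finset.range m, ((1:ℝ)/2^(j+1)) ≤ 1 := by
  have h : ∀ k : ℕ, ∑ j ∈ Finset.range k, ((1:ℝ)/2^(j+1)) = 1 - 1/2^k := by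
    intro k
    induction k with
    | zero => simp
    | succ k ih =>
      rw [Finset.sum_range_succ, ih, pow_succ]
      have h2 : ((2:ℝ)^k) ≠ 0 := by positivity
      field_simp
      ring
  rw [h m]
  have : (0:ℝ) < 1/2^m := by positivity
  linarith

set_option maxHeartbeats 1000000 in
/-- iteration lemma for difference quotients. -/
theorem stmt1 (σ τ C₀ : ℝ) (hσ : 0 < σ) (hτ : 0 < τ) (hστ : σ + τ ≠ 1) (hC₀ : 0 < C₀) :
    ∃ C : ℝ, 0 < C ∧
      ∀ n : ℕ, 1 ≤ n →
      ∀ ε : ℝ, 0 < ε →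
      ∀ e : En n, ‖e‖ = 1 →
      ∀ R : ℝ, 0 < R →
      ∀ (u : En n → ℝ) (K : ℝ),
        (∀ x ∈ ball (0 : En n) (2 * R), |u x| ≤ K) →
        (∀ x ∈ ball (0 : En n) (R / 4), ∀ h : ℝ, 0 < |h| → |h| < R / 8 →
          |diffQuot u e ε σ R h (x + h • e) - diffQuot u e ε σ R h x| ≤
            C₀ * K * ((|h| / R) ^ τ + (ε / R) ^ τ)) →
        ∀ x ∈ ball (0 : En n) (R / 8), ∀ h : ℝ, 0 < |h| → |h| < R / 8 →
          |u (x + h • e) - u x| ≤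
            C * K * ((|h| / R) ^ min 1 (σ + τ) + (ε / R) ^ (σ + τ)) := by
  have hγ : (0:ℝ) < σ + τ := by positivity
  set γ : ℝ := σ + τ with hγdef
  set r : ℝ := (2:ℝ) ^ (γ - 1) with hrdef
  have hr0 : 0 < r := Real.rpow_pos_of_pos two_pos _
  have hr_ne : r ≠ 1 := by
    rcases lt_or_gt_of_ne hστ with hlt | hgt
    · exact ne_of_lt (Real.rpow_lt_one_of_one_lt_of_neg one_lt_two (by linarith))
    · have : (1:ℝ) < r := Real.one_lt_rpow_iff_of_pos two_pos |>.mpr (Or.inl ⟨one_lt_two, by linarith⟩)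
      exact ne_of_gt this
  have habsr : 0 < |r - 1| := abs_pos.mpr (sub_ne_zero.mpr hr_ne)
  set cγ : ℝ := 1 / (2 * |r - 1|) with hcγdef
  have hcγ : 0 < cγ := by positivity
  refine ⟨32 + 3*C₀*cγ + 3*C₀, by positivity, ?_⟩
  intro n hn ε hε e he R hR u K hK hquot x hx h hh0 hh8
  set C : ℝ := 32 + 3*C₀*cγ + 3*C₀ with hCdef
  have hK0 : 0 ≤ K := le_trans (abs_nonneg _) (hK 0 (mem_ball_self (by linarith)))
  rw [mem_ball_zero_iff] at hx
  set η : ℝ := ε / R with hηdef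
  have hη : 0 < η := by positivity
  -- x is in the ball of radius R/4
  have hxR4 : ‖x‖ < R / 4 := by linarith
  -- second-difference bound
  have hdelta : ∀ h' : ℝ, 0 < |h'| → |h'| < R/8 →
      |u (x + h'•e + h'•e) - 2*u (x + h'•e) + u x| ≤ 3*C₀*K*((|h'|/R)^γ + η^γ) := by
    intro h' h0 h8
    have hq := hquot x (by rwa [mem_ball_zero_iff]) h' h0 h8
    have hA0 : (0:ℝ) < |h'|^σ + ε^σ := by
      have := Real.rpow_pos_of_pos hε σ
      have := Real.rpow_nonneg (abs_nonneg h') σ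
      linarith
    have hRσ : (0:ℝ) < R ^ σ := Real.rpow_pos_of_pos hR σ
    have keyeq : diffQuot u e ε σ R h' (x + h'•e) - diffQuot u e ε σ R h' x
        = R^σ * (u (x + h'•e + h'•e) - 2*u (x+h'•e) + u x) / (|h'|^σ + ε^σ) := by
      simp only [diffQuot]
      ring
    rw [keyeq, abs_div, abs_of_pos hA0, abs_mul, abs_of_pos hRσ, div_le_iff₀ hA0] at hq
    -- hq : R^σ * |Δ| ≤ C₀K(t'^τ + η^τ) * (|h'|^σ + ε^σ)
    have hdiv : (|h'|^σ + ε^σ) / R^σ = (|h'|/R)^σ + (ε/R)^σ := by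
      rw [Real.div_rpow (abs_nonneg h') hR.le, Real.div_rpow hε.le hR.le, add_div]
    have ht'0 : 0 < |h'|/R := by positivity
    have hprod : ((|h'|/R)^τ + η^τ) * ((|h'|/R)^σ + η^σ) ≤ 3*((|h'|/R)^γ + η^γ) := by
      have hy1 : (|h'|/R)^τ * η^σ ≤ (|h'|/R)^γ + η^γ := young_aux ht'0.le hη.le hσ hτ
      have hy2 : η^τ * (|h'|/R)^σ ≤ η^γ + (|h'|/R)^γ := young_aux hη.le ht'0.le hσ hτ
      have hee : (|h'|/R)^γ = (|h'|/R)^σ * (|h'|/R)^τ := Real.rpow_add' ht'0.le (by positivity)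
      have hee2 : η^γ = η^σ * η^τ := Real.rpow_add' hη.le (by positivity)
      nlinarith
    have hstep : |u (x + h'•e + h'•e) - 2*u (x+h'•e) + u x|
        ≤ C₀ * K * ((|h'|/R)^τ + η^τ) * ((|h'|^σ + ε^σ) / R^σ) := by
      rw [show C₀ * K * ((|h'|/R)^τ + η^τ) * ((|h'|^σ + ε^σ) / R^σ)
            = (C₀ * K * ((|h'|/R)^τ + η^τ) * (|h'|^σ + ε^σ)) / R^σ by ring,
        le_div_iff₀ hRσ]
      linarith
    calc |u (x + h'•e + h'•e) - 2*u (x+h'•e) + u x|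
        ≤ C₀ * K * ((|h'|/R)^τ + η^τ) * ((|h'|^σ + ε^σ) / R^σ) := hstep
      _ = C₀ * K * (((|h'|/R)^τ + η^τ) * ((|h'|/R)^σ + η^σ)) := by rw [hdiv]; ring
      _ ≤ C₀ * K * (3*((|h'|/R)^γ + η^γ)) := by
          apply mul_le_mul_of_nonneg_left hprod (by positivity)
      _ = 3*C₀*K*((|h'|/R)^γ + η^γ) := by ring
  -- the doubling iteration
  have key : ∀ m : ℕ, ∀ h' : ℝ, 0 < |h'| → 2^m * |h'| < R/8 →
      |u (x + h'•e) - u x| ≤ 2*K/2^m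
        + 3*C₀*K * ∑ j ∈ Finset.range m, ((2^j * (|h'|/R))^γ + η^γ)/2^(j+1) := by
    intro m
    induction m with
    | zero =>
      intro h' h0 hlt
      simp only [pow_zero, one_mul] at hlt ⊢
      simp only [Finset.range_zero, Finset.sum_empty, mul_zero, add_zero]
      have hmem1 : |u (x + h'•e)| ≤ K := by
        apply hK
        rw [mem_ball_zero_iff]
        calc ‖x + h'•e‖ ≤ ‖x‖ + ‖h'•e‖ := norm_add_le _ _
          _ = ‖x‖ + |h'| * 1 := by rw [norm_smul, he, Real.norm_eq_abs]
          _ < 2*R := by linarith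
      have hmem2 : |u x| ≤ K := hK x (by rw [mem_ball_zero_iff]; linarith)
      calc |u (x + h'•e) - u x| ≤ |u (x + h'•e)| + |u x| := abs_sub _ _
        _ ≤ 2*K/1 := by linarith
    | succ m ih =>
      intro h' h0 hlt
      have h2pow : (1:ℝ) ≤ 2^(m+1) := one_le_pow₀ (by norm_num : (1:ℝ) ≤ 2)
      have h8' : |h'| < R/8 := by
        have := le_mul_of_one_le_left (abs_nonneg h') h2pow
        linarith
      have h0' : 0 < |2*h'| := by rw [abs_mul, abs_two]; linarith
      have hlt' : 2^m * |2*h'| < R/8 := by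
        rw [abs_mul, abs_two]
        rw [pow_succ] at hlt
        linarith
      have ihh := ih (2*h') h0' hlt'
      have hd := hdelta h' h0 h8'
      have hsm : x + (2*h')•e = x + h'•e + h'•e := by
        rw [mul_smul, two_smul, ← add_assoc]
      rw [hsm] at ihh
      have habs : |u (x + h'•e) - u x| ≤
          (|u (x + h'•e + h'•e) - u x| + |u (x + h'•e + h'•e) - 2*u (x + h'•e) + u x|)/2 := by
        have heq : u (x + h'•e) - u x =
            ((u (x + h'•e + h'•e) - u x) - (u (x + h'•e + h'•e) - 2*u (x + h'•e) + u x))/2 := by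
          ring
        rw [heq]
        rw [abs_div, abs_two]
        have := abs_sub (u (x + h'•e + h'•e) - u x) (u (x + h'•e + h'•e) - 2*u (x + h'•e) + u x)
        linarith
      have hsum : ∑ j ∈ Finset.range (m+1), ((2^j * (|h'|/R))^γ + η^γ)/2^(j+1)
          = ((|h'|/R)^γ + η^γ)/2
            + (1/2) * ∑ j ∈ Finset.range m, ((2^j * (|2*h'|/R))^γ + η^γ)/2^(j+1) := by
        rw [Finset.sum_range_succ']
        have hterm : ∀ j ∈ Finset.range m,
            ((2^(j+1) * (|h'|/R))^γ + η^γ)/2^(j+1+1)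
            = (1/2) * (((2^j * (|2*h'|/R))^γ + η^γ)/2^(j+1)) := by
          intro j _
          have e1 : (2:ℝ)^(j+1) * (|h'|/R) = 2^j * (|2*h'|/R) := by
            rw [abs_mul, abs_two, pow_succ]
            ring
          rw [e1]
          ring
        rw [Finset.sum_congr rfl hterm, ← Finset.mul_sum]
        simp only [pow_zero, one_mul, pow_one]
        ring
      rw [hsum]
      have hps : (2:ℝ)^(m+1) = 2^m * 2 := pow_succ 2 m
      calc |u (x + h'•e) - u x|
          ≤ (|u (x + h'•e + h'•e) - u x| + |u (x + h'•e + h'•e) - 2*u (x + h'•e) + u x|)/2 := habs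
        _ ≤ ((2*K/2^m + 3*C₀*K * ∑ j ∈ Finset.range m, ((2^j * (|2*h'|/R))^γ + η^γ)/2^(j+1))
              + 3*C₀*K*((|h'|/R)^γ + η^γ))/2 := by
            gcongr
        _ = 2*K/2^(m+1) + 3*C₀*K * (((|h'|/R)^γ + η^γ)/2
              + (1/2) * ∑ j ∈ Finset.range m, ((2^j * (|2*h'|/R))^γ + η^γ)/2^(j+1)) := by
            rw [hps]
            ring
  -- choose the maximal number of doublings
  have hex : ∃ m : ℕ, R/8 ≤ 2^(m+1) * |h| := by
    obtain ⟨k, hk⟩ := pow_unbounded_of_one_lt (R/8/|h|) (one_lt_two (α := ℝ))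
    refine ⟨k, ?_⟩
    rw [div_lt_iff₀ hh0] at hk
    have h2 : (2:ℝ)^k ≤ 2^(k+1) := by
      have : (2:ℝ)^(k+1) = 2^k*2 := pow_succ 2 k
      nlinarith [pow_pos (two_pos (α := ℝ)) k]
    nlinarith [abs_nonneg h]
  set m : ℕ := Nat.find hex with hmdef
  have hm1 : R/8 ≤ 2^(m+1) * |h| := Nat.find_spec hex
  have hm0 : 2^m * |h| < R/8 := by
    rcases Nat.eq_zero_or_pos m with h0 | hpos
    · rw [h0]
      simpa using hh8
    · have hmin := Nat.find_min hex (m := m - 1) (by omega)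
      rw [not_le] at hmin
      have : m - 1 + 1 = m := by omega
      rwa [this] at hmin
  have hkey := key m h hh0 hm0
  set t : ℝ := |h| / R with htdef
  have ht0 : 0 < t := by positivity
  have ht1 : t < 1 := by
    rw [htdef, div_lt_one hR]
    linarith
  set ξ : ℝ := min 1 γ with hξdef
  have hξγ : ξ ≤ γ := min_le_right 1 γ
  have hξ1 : ξ ≤ 1 := min_le_left 1 γ
  have hξ0 : 0 < ξ := lt_min one_pos hγ
  have htξ0 : 0 ≤ t ^ ξ := Real.rpow_nonneg ht0.le ξ
  have hηγ0 : 0 ≤ η ^ γ := Real.rpow_nonneg hη.le γ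
  -- split the sum
  have hsplit : ∑ j ∈ Finset.range m, ((2^j * t)^γ + η^γ)/2^(j+1)
      = (∑ j ∈ Finset.range m, ((2:ℝ)^j * t)^γ/2^(j+1))
        + ∑ j ∈ Finset.range m, η^γ/2^(j+1) := by
    rw [← Finset.sum_add_distrib]
    apply Finset.sum_congr rfl
    intro j _
    rw [add_div]
  have hpart2 : ∑ j ∈ Finset.range m, η^γ/2^(j+1) ≤ η^γ := by
    have : ∑ j ∈ Finset.range m, η^γ/2^(j+1) = η^γ * ∑ j ∈ Finset.range m, ((1:ℝ)/2^(j+1)) := by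
      rw [Finset.mul_sum]
      apply Finset.sum_congr rfl
      intro j _
      ring
    rw [this]
    calc η^γ * ∑ j ∈ Finset.range m, ((1:ℝ)/2^(j+1)) ≤ η^γ * 1 :=
          mul_le_mul_of_nonneg_left (half_sum_le m) hηγ0
      _ = η^γ := mul_one _
  -- rewrite part 1 as a geometric sum
  have hterm : ∀ j : ℕ, ((2:ℝ)^j * t)^γ/2^(j+1) = t^γ/2 * r^j := by
    intro j
    have h2j : ((2:ℝ)^j)^γ = 2^j * r^j := by
      rw [← Real.rpow_natCast 2 j, ← Real.rpow_mul (by norm_num : (0:ℝ) ≤ 2)]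
      rw [hrdef, ← Real.rpow_natCast ((2:ℝ)^(γ-1)) j, ← Real.rpow_mul (by norm_num : (0:ℝ) ≤ 2)]
      rw [← Real.rpow_add two_pos]
      ring_nf
    have hmr : ((2:ℝ)^j * t)^γ = (2:ℝ)^j * r^j * t^γ := by
      rw [Real.mul_rpow (by positivity) ht0.le, h2j]
    rw [hmr, pow_succ]
    have h2jne : ((2:ℝ)^j) ≠ 0 := by positivity
    field_simp
  have hpart1eq : ∑ j ∈ Finset.range m, ((2:ℝ)^j * t)^γ/2^(j+1)
      = t^γ/2 * ∑ j ∈ Finset.range m, r^j := by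
    rw [Finset.mul_sum]
    exact Finset.sum_congr rfl (fun j _ => hterm j)
  have hgeom : ∑ j ∈ Finset.range m, r^j = (r^m - 1)/(r - 1) := geom_sum_eq hr_ne m
  have htγ0 : 0 ≤ t ^ γ := Real.rpow_nonneg ht0.le γ
  -- bound part 1 in the two cases
  have hpart1 : ∑ j ∈ Finset.range m, ((2:ℝ)^j * t)^γ/2^(j+1) ≤ cγ * t^ξ := by
    rw [hpart1eq, hgeom]
    rcases lt_or_gt_of_ne hστ with hlt | hgt
    · -- γ < 1
      have hr1 : r < 1 := Real.rpow_lt_one_of_one_lt_of_neg one_lt_two (by linarith)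
      have hξeq : ξ = γ := min_eq_right (by linarith)
      have habs1 : |r - 1| = 1 - r := by rw [abs_of_neg (by linarith)]; ring
      have hrm : (0:ℝ) ≤ r^m := (pow_pos hr0 m).le
      have h1r : (0:ℝ) < 1 - r := by linarith
      have hfrac : (r^m - 1)/(r - 1) ≤ 1/(1 - r) := by
        have e1 : (r^m - 1)/(r - 1) = (1 - r^m)/(1 - r) := by
          rw [div_eq_div_iff (by linarith) (by linarith)]
          ring
        rw [e1]
        apply div_le_div_of_nonneg_right (by linarith) h1r.le
      calc t^γ/2 * ((r^m - 1)/(r - 1)) ≤ t^γ/2 * (1/(1 - r)) :=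
            mul_le_mul_of_nonneg_left hfrac (by positivity)
        _ = cγ * t^γ := by
            rw [hcγdef, habs1]
            have h1rne : (1:ℝ) - r ≠ 0 := by linarith
            field_simp
        _ = cγ * t^ξ := by rw [hξeq]
    · -- γ > 1
      have hr1 : (1:ℝ) < r := Real.one_lt_rpow_iff_of_pos two_pos |>.mpr
        (Or.inl ⟨one_lt_two, by linarith⟩)
      have hξeq : ξ = 1 := min_eq_left (by linarith)
      have habs1 : |r - 1| = r - 1 := abs_of_pos (by linarith)
      have hr1' : (0:ℝ) < r - 1 := by linarith
      have hfrac : (r^m - 1)/(r - 1) ≤ r^m/(r - 1) :=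
        div_le_div_of_nonneg_right (by linarith) hr1'.le
      have hrmEq : r^m = ((2:ℝ)^m)^(γ-1) := by
        rw [hrdef, ← Real.rpow_natCast ((2:ℝ)^(γ-1)) m, ← Real.rpow_mul (by norm_num : (0:ℝ) ≤ 2),
          ← Real.rpow_natCast (2:ℝ) m, ← Real.rpow_mul (by norm_num : (0:ℝ) ≤ 2), mul_comm]
      have htm1 : t * 2^m ≤ 1 := by
        have hcm : |h| * 2^m = 2^m * |h| := mul_comm _ _
        rw [htdef, div_mul_eq_mul_div, div_le_one hR]
        linarith
      have hkey2 : t^γ * r^m ≤ t := by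
        have htγeq : t^γ = t * t^(γ-1) := by
          rw [show γ = 1 + (γ-1) by ring, Real.rpow_add ht0, Real.rpow_one]
          ring_nf
        have hmul : t^(γ-1) * ((2:ℝ)^m)^(γ-1) = (t * 2^m)^(γ-1) :=
          (Real.mul_rpow ht0.le (by positivity)).symm
        have hle1 : (t * 2^m)^(γ-1) ≤ 1 :=
          Real.rpow_le_one (by positivity) htm1 (by linarith)
        calc t^γ * r^m = t * (t^(γ-1) * ((2:ℝ)^m)^(γ-1)) := by rw [htγeq, hrmEq]; ring
          _ = t * (t * 2^m)^(γ-1) := by rw [hmul]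
          _ ≤ t * 1 := mul_le_mul_of_nonneg_left hle1 ht0.le
          _ = t := mul_one t
      calc t^γ/2 * ((r^m - 1)/(r - 1)) ≤ t^γ/2 * (r^m/(r - 1)) :=
            mul_le_mul_of_nonneg_left hfrac (by positivity)
        _ = (t^γ * r^m) * (1/(2*(r-1))) := by
            have h1rne : r - 1 ≠ 0 := by linarith
            field_simp
        _ ≤ t * (1/(2*(r-1))) := mul_le_mul_of_nonneg_right hkey2 (by positivity)
        _ = cγ * t^ξ := by
            rw [hcγdef, habs1, hξeq, Real.rpow_one]
            have h1rne : r - 1 ≠ 0 := by linarith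
            field_simp
  have hS : ∑ j ∈ Finset.range m, ((2^j * t)^γ + η^γ)/2^(j+1) ≤ cγ * t^ξ + η^γ := by
    rw [hsplit]
    exact add_le_add hpart1 hpart2
  have hfrac2 : 1/(2:ℝ)^m ≤ 16 * t := by
    rw [div_le_iff₀ (pow_pos two_pos m)]
    have e1 : 16 * t * 2^m = 16 * (2^m * |h|) / R := by rw [htdef]; ring
    rw [e1, le_div_iff₀ hR]
    have hps2 : (2:ℝ)^(m+1) = 2^m * 2 := pow_succ 2 m
    nlinarith
  have httξ : t ≤ t^ξ := by
    calc t = t^(1:ℝ) := (Real.rpow_one t).symm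
      _ ≤ t^ξ := Real.rpow_le_rpow_of_exponent_ge ht0 ht1.le hξ1
  have h2K : 2*K/2^m ≤ 32*K*t^ξ := by
    have e1 : 2*K/2^m = 2*K*(1/2^m) := by ring
    calc 2*K/2^m = 2*K*(1/2^m) := e1
      _ ≤ 2*K*(16*t) := mul_le_mul_of_nonneg_left hfrac2 (by linarith)
      _ = 32*K*t := by ring
      _ ≤ 32*K*t^ξ := by nlinarith
  calc |u (x + h•e) - u x|
      ≤ 2*K/2^m + 3*C₀*K * ∑ j ∈ Finset.range m, ((2^j * t)^γ + η^γ)/2^(j+1) := hkey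
    _ ≤ 32*K*t^ξ + 3*C₀*K*(cγ * t^ξ + η^γ) := by
        have := mul_le_mul_of_nonneg_left hS (by positivity : (0:ℝ) ≤ 3*C₀*K)
        linarith
    _ ≤ C*K*(t^ξ + η^γ) := by
        rw [hCdef]
        nlinarith [mul_nonneg hK0 htξ0, mul_nonneg hK0 hηγ0,
          mul_nonneg (mul_nonneg hC₀.le hK0) htξ0,
          mul_nonneg (mul_nonneg hC₀.le hK0) hηγ0,
          mul_nonneg (mul_nonneg (mul_nonneg hC₀.le hcγ.le) hK0) hηγ0,
          mul_nonneg (mul_nonneg (mul_nonneg hC₀.le hcγ.le) hK0) htξ0]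
end

section
/- Let Ω ⊂ ℝⁿ be a bounded domain, let 0 ≤ α < 1, β = 1 − α, ε > 0, let g : ℝⁿ∖Ω → ℝ be a bounded Borel function, and let u : ℝⁿ → ℝ be a bounded Borel function such that u(x) = g(x) for x ∈ ℝⁿ∖Ω and u(x) = α·sup_{ν ∈ B₁} (u(x+εν) + u(x−εν))/2 + β·⨍_{B₁} u(x+εy) dy for every x ∈ Ω. Then for every x ∈ Ω the jump of u at x satisfies limsup_{y→x} u(y) − liminf_{y→x} u(y) ≤ 2·‖g‖_{L∞(ℝⁿ∖Ω)}·α^{⌈dist(x,∂Ω)/ε⌉}. -/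
open MeasureTheory Metric Filter Topology

set_option maxHeartbeats 1000000

namespace Stmt10Aux
open Set Module Pointwise
open scoped RealInnerProductSpace

variable {n : ℕ}


variable {n : ℕ}

noncomputable def oscB (u : En n → ℝ) (z : En n) (r : ℝ) : ℝ :=
  sSup (u '' ball z r) - sInf (u '' ball z r)

lemma bddAbove_im {u : En n → ℝ} {G : ℝ} (hb : ∀ x, |u x| ≤ G) (s : Set (En n)) :
    BddAbove (u '' s) := ⟨G, by rintro _ ⟨x, -, rfl⟩; exact (abs_le.1 (hb x)).2⟩

lemma bddBelow_im {u : En n → ℝ} {G : ℝ} (hb : ∀ x, |u x| ≤ G) (s : Set (En n)) :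
    BddBelow (u '' s) := ⟨-G, by rintro _ ⟨x, -, rfl⟩; exact (abs_le.1 (hb x)).1⟩

lemma oscB_mono {u : En n → ℝ} {G : ℝ} (hb : ∀ x, |u x| ≤ G) {z z' : En n} {r r' : ℝ}
    (hr : 0 < r) (h : ball z r ⊆ ball z' r') : oscB u z r ≤ oscB u z' r' := by
  have hne : (u '' ball z r).Nonempty := ⟨u z, z, mem_ball_self hr, rfl⟩
  exact sub_le_sub (csSup_le_csSup (bddAbove_im hb _) hne (image_mono h))
    (csInf_le_csInf (bddBelow_im hb _) hne (image_mono h))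

lemma oscB_le_2G {u : En n → ℝ} {G : ℝ} (hb : ∀ x, |u x| ≤ G) (z : En n) {r : ℝ} (hr : 0 < r) :
    oscB u z r ≤ 2 * G := by
  have hne : (u '' ball z r).Nonempty := ⟨u z, z, mem_ball_self hr, rfl⟩
  have h1 : sSup (u '' ball z r) ≤ G := csSup_le hne (by rintro _ ⟨x, -, rfl⟩; exact (abs_le.1 (hb x)).2)
  have h2 : -G ≤ sInf (u '' ball z r) := le_csInf hne (by rintro _ ⟨x, -, rfl⟩; exact (abs_le.1 (hb x)).1)
  unfold oscB; linarith

lemma unif {u : En n → ℝ} {G : ℝ} (hb : ∀ x, |u x| ≤ G) {K : Set (En n)} (hK : IsCompact K)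
    {C : ℝ} (h : ∀ z ∈ K, ∃ r > 0, oscB u z (2 * r) ≤ C) :
    ∃ r > 0, ∀ z ∈ K, oscB u z r ≤ C := by
  rcases K.eq_empty_or_nonempty with rfl | hne
  · exact ⟨1, one_pos, by simp⟩
  choose! r hr hosc using h
  obtain ⟨t, ht⟩ := hK.elim_finite_subcover (fun z : K => ball (z : En n) (r z))
    (fun _ => isOpen_ball) (fun z hz => mem_iUnion.2 ⟨⟨z, hz⟩, mem_ball_self (hr z hz)⟩)
  have htne : t.Nonempty := by
    rcases hne with ⟨z, hz⟩
    rcases mem_iUnion₂.1 (ht hz) with ⟨i, hi, -⟩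
    exact ⟨i, hi⟩
  refine ⟨t.inf' htne (fun i => r i), ?_, ?_⟩
  · exact (Finset.lt_inf'_iff htne).2 fun i hi => hr i i.2
  · intro z hz
    rcases mem_iUnion₂.1 (ht hz) with ⟨i, hi, hzi⟩
    have hsub : ball z (t.inf' htne fun i => r i) ⊆ ball (i : En n) (2 * r i) := by
      intro w hw
      have h1 : dist w (i : En n) ≤ dist w z + dist z (i : En n) := dist_triangle _ _ _
      have h2 : dist w z < t.inf' htne fun i => r i := mem_ball.1 hw
      have h3 : t.inf' htne (fun i => r i) ≤ r i := Finset.inf'_le _ hi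
      have h4 : dist z (i : En n) < r i := mem_ball.1 hzi
      exact mem_ball.2 (by linarith)
    exact le_trans (oscB_mono hb ((Finset.lt_inf'_iff htne).2 fun i hi => hr i i.2) hsub)
      (hosc i i.2)

lemma ball_subset_of_infDist_frontier {Ω : Set (En n)} (hΩo : IsOpen Ω) {x : En n} (hx : x ∈ Ω)
    {r : ℝ} (hr : r ≤ infDist x (frontier Ω)) : ball x r ⊆ Ω := by
  rcases le_or_gt r 0 with h0 | h0
  · simp [ball_eq_empty.2 h0]
  intro y hy
  by_contra hyΩ
  have hnf : ∀ w ∈ ball x r, w ∉ frontier Ω := by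
    intro w hw hwf
    have h1 : dist x w < r := by rw [dist_comm]; exact mem_ball.1 hw
    exact absurd (infDist_le_dist_of_mem (x := x) hwf) (not_le.2 (lt_of_lt_of_le h1 hr))
  have hcov : ball x r ⊆ interior Ω ∪ (closure Ω)ᶜ := by
    intro w hw
    by_cases hcl : w ∈ closure Ω
    · left
      by_contra hint
      exact hnf w hw ⟨hcl, hint⟩
    · right; exact hcl
  have hpre := (convex_ball x r).isPreconnected
  have h1 : (ball x r ∩ interior Ω).Nonempty :=
    ⟨x, mem_ball_self h0, by rwa [hΩo.interior_eq]⟩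
  have h2 : (ball x r ∩ (closure Ω)ᶜ).Nonempty := by
    refine ⟨y, hy, fun hcl => ?_⟩
    rcases hcov hy with h | h
    · exact hyΩ (hΩo.interior_eq ▸ h)
    · exact h hcl
  have := hpre (interior Ω) (closure Ω)ᶜ isOpen_interior (isClosed_closure.isOpen_compl)
    hcov h1 h2
  rcases this with ⟨w, -, hw1, hw2⟩
  exact hw2 (subset_closure (interior_subset hw1))



variable {n : ℕ}

lemma integrableOn_ball {u : En n → ℝ} (hm : Measurable u) {G : ℝ} (hb : ∀ x, |u x| ≤ G)
    (c : En n) (R : ℝ) : IntegrableOn u (ball c R) volume :=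
  Measure.integrableOn_of_bounded measure_ball_lt_top.ne hm.aestronglyMeasurable
    (ae_of_all _ fun x => by rw [Real.norm_eq_abs]; exact hb x)

lemma integrableOn_shift {u : En n → ℝ} (hm : Measurable u) {G : ℝ} (hb : ∀ x, |u x| ≤ G)
    {ε : ℝ} (c : En n) :
    IntegrableOn (fun y => u (c + ε • y)) (ball (0 : En n) 1) volume := by
  have hmeas : Measurable fun y : En n => u (c + ε • y) :=
    hm.comp ((continuous_const.add (continuous_id.const_smul ε)).measurable)
  exact Measure.integrableOn_of_bounded measure_ball_lt_top.ne hmeas.aestronglyMeasurable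
    (ae_of_all _ fun x => by rw [Real.norm_eq_abs]; exact hb _)

lemma avg_eq (hn : 1 ≤ n) {u : En n → ℝ} (hm : Measurable u)
    {ε : ℝ} (hε : 0 < ε) (c : En n) :
    ⨍ y in ball (0 : En n) 1, u (c + ε • y) =
      (volume (ball (0 : En n) 1)).toReal⁻¹ *
        ((ε ^ finrank ℝ (En n))⁻¹ * ∫ z in ball c ε, u z) := by
  haveI : Nonempty (Fin n) := ⟨⟨0, hn⟩⟩
  rw [setAverage_eq, smul_eq_mul]
  congr 1
  have h1 : ∫ y in ball (0 : En n) 1, u (c + ε • y) =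
      (ε ^ finrank ℝ (En n))⁻¹ • ∫ w in ε • ball (0 : En n) 1, u (c + w) :=
    Measure.setIntegral_comp_smul_of_pos volume (fun w => u (c + w)) _ hε
  rw [h1, smul_eq_mul]
  congr 1
  have h2 : ε • ball (0 : En n) 1 = ball (0 : En n) ε := by
    rw [smul_ball hε.ne' (0 : En n) 1, smul_zero, Real.norm_eq_abs, abs_of_pos hε, mul_one]
  rw [h2]
  have h3 : ∀ w : En n, (ball (0 : En n) ε).indicator (fun w => u (c + w)) w =
      (ball c ε).indicator u (c + w) := by
    intro w
    by_cases hw : w ∈ ball (0 : En n) ε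
    · rw [indicator_of_mem hw, indicator_of_mem]
      simpa [mem_ball, dist_eq_norm] using hw
    · rw [indicator_of_notMem hw, indicator_of_notMem]
      intro hcw
      exact hw (by simpa [mem_ball, dist_eq_norm] using hcw)
  rw [← integral_indicator measurableSet_ball, ← integral_indicator measurableSet_ball]
  calc ∫ w, (ball (0:En n) ε).indicator (fun w => u (c + w)) w
      = ∫ w, (ball c ε).indicator u (c + w) := by simp_rw [h3]
    _ = ∫ z, (ball c ε).indicator u z := integral_add_left_eq_self _ c

lemma ball_vol (hn : 1 ≤ n) (c : En n) {R : ℝ} (hR : 0 ≤ R) :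
    volume (ball c R) = ENNReal.ofReal (R ^ finrank ℝ (En n)) * volume (ball (0 : En n) 1) := by
  haveI : Nonempty (Fin n) := ⟨⟨0, hn⟩⟩
  exact Measure.addHaar_ball volume c hR

lemma F_cont (hn : 1 ≤ n) {u : En n → ℝ} (hm : Measurable u) {G : ℝ} (hb : ∀ x, |u x| ≤ G)
    {ε : ℝ} (hε : 0 < ε) :
    Continuous fun c : En n => ∫ z in ball c ε, u z := by
  haveI : Nonempty (Fin n) := ⟨⟨0, hn⟩⟩
  have hG0 : 0 ≤ G := le_trans (abs_nonneg _) (hb 0)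
  set m := finrank ℝ (En n) with hm'
  set V := (volume (ball (0 : En n) 1)).toReal with hV
  set F := fun c : En n => ∫ z in ball c ε, u z with hF
  rw [continuous_iff_continuousAt]
  intro x
  set ψ : ℝ → ℝ := fun d => 2 * (G * ((ε ^ m - (ε - d) ^ m) * V)) with hψ
  have hFd : ∀ x' : En n, dist x' x < ε → |F x' - F x| ≤ ψ (dist x' x) := by
    intro x' hdε
    set d := dist x' x with hd
    have hd0 : 0 ≤ d := dist_nonneg
    have hsub1 : ball x (ε - d) ⊆ ball x' ε := by
      intro z hz
      have h1 : dist z x' ≤ dist z x + dist x x' := dist_triangle _ _ _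
      have h2 : dist x x' = d := dist_comm x x'
      exact mem_ball.2 (by have := mem_ball.1 hz; linarith)
    have hsub2 : ball x (ε - d) ⊆ ball x ε := ball_subset_ball (by linarith)
    have key : ∀ (c : En n), ball x (ε - d) ⊆ ball c ε →
        |F c - ∫ z in ball x (ε - d), u z| ≤ G * ((ε ^ m - (ε - d) ^ m) * V) := by
      intro c hsub
      have hdiff : ∫ z in ball c ε \ ball x (ε - d), u z
          = F c - ∫ z in ball x (ε - d), u z :=
        integral_diff measurableSet_ball (integrableOn_ball hm hb c ε) hsub
      rw [← hdiff]
      have hmlt : volume (ball c ε \ ball x (ε - d)) < ⊤ :=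
        (measure_mono diff_subset).trans_lt measure_ball_lt_top
      have hbnd := norm_setIntegral_le_of_norm_le_const (μ := volume)
        (s := ball c ε \ ball x (ε - d)) (f := u) (C := G) hmlt
        (fun z _ => by rw [Real.norm_eq_abs]; exact hb z)
      rw [Real.norm_eq_abs, measureReal_def] at hbnd
      have hc : (0:ℝ) < ε - d := by
        have : d < ε := hdε
        linarith
      have hveq : (volume (ball c ε \ ball x (ε - d))).toReal = (ε ^ m - (ε - d) ^ m) * V := by
        rw [measure_diff hsub measurableSet_ball.nullMeasurableSet measure_ball_lt_top.ne]
        rw [ball_vol hn c hε.le, ball_vol hn x hc.le]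
        rw [ENNReal.toReal_sub_of_le]
        · rw [ENNReal.toReal_mul, ENNReal.toReal_mul, ENNReal.toReal_ofReal (by positivity),
            ENNReal.toReal_ofReal (by positivity), ← hV, sub_mul]
        · exact mul_le_mul_left (ENNReal.ofReal_le_ofReal
            (pow_le_pow_left₀ (by linarith) (by linarith) m)) _
        · exact ENNReal.mul_ne_top ENNReal.ofReal_ne_top measure_ball_lt_top.ne
      rw [hveq] at hbnd
      exact hbnd
    have h1 := key x' hsub1
    have h2 := key x hsub2
    have habs : |F x' - F x| ≤ |F x' - ∫ z in ball x (ε - d), u z| +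
        |F x - ∫ z in ball x (ε - d), u z| := by
      have := abs_sub_le (F x') (∫ z in ball x (ε - d), u z) (F x)
      rw [abs_sub_comm (∫ z in ball x (ε - d), u z) (F x)] at this
      exact this
    show |F x' - F x| ≤ 2 * (G * ((ε ^ m - (ε - d) ^ m) * V))
    linarith
  have hψc : Continuous ψ := by fun_prop
  have hψ0 : ψ 0 = 0 := by simp [hψ]
  have hdist : Tendsto (fun x' : En n => dist x' x) (𝓝 x) (𝓝 0) := by
    have h := tendsto_iff_dist_tendsto_zero.1 (tendsto_id (x := 𝓝 x))
    exact h
  have hψt : Tendsto (fun x' : En n => ψ (dist x' x)) (𝓝 x) (𝓝 0) := by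
    have := (hψc.tendsto 0).comp hdist
    rwa [hψ0] at this
  have h0 : Tendsto (fun x' => |F x' - F x|) (𝓝 x) (𝓝 0) := by
    apply squeeze_zero' (Eventually.of_forall fun _ => abs_nonneg _) _ hψt
    filter_upwards [Metric.ball_mem_nhds x hε] with x' hx'
    exact hFd x' (mem_ball.1 hx')
  rw [ContinuousAt, tendsto_iff_dist_tendsto_zero]
  simpa [Real.dist_eq] using h0



variable {n : ℕ}

lemma maxpr (hn : 1 ≤ n) {Ω : Set (En n)} {R : ℝ} (hR : 0 < R) (hΩR : Ω ⊆ ball 0 R)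
    {α β ε : ℝ} (hα : 0 ≤ α) (hβ : 0 < β) (hβ1 : β ≤ 1) (hαβ : α + β = 1) (hε : 0 < ε)
    {v : En n → ℝ} (hm : Measurable v) {Mb : ℝ} (hb : ∀ x, |v x| ≤ Mb)
    {G : ℝ} (hout : ∀ x ∉ Ω, v x ≤ G)
    (hkey : ∀ x ∈ Ω, v x ≤ α * sSup (Set.range v) + β * ⨍ y in ball (0:En n) 1, v (x + ε • y)) :
    ∀ x, v x ≤ G := by
  haveI : Nonempty (Fin n) := ⟨⟨0, hn⟩⟩
  set M := sSup (Set.range v) with hM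
  have hbdd : BddAbove (Set.range v) := ⟨Mb, by rintro _ ⟨x, rfl⟩; exact (abs_le.1 (hb x)).2⟩
  have hub : ∀ x, v x ≤ M := fun x => le_csSup hbdd (Set.mem_range_self x)
  suffices hMG : M ≤ G by intro x; exact (hub x).trans hMG
  by_contra hMG
  push_neg at hMG
  set i0 : Fin n := ⟨0, hn⟩
  set e : En n := EuclideanSpace.single i0 (1:ℝ) with he_def
  have he : ‖e‖ = 1 := by rw [he_def, EuclideanSpace.norm_single]; norm_num
  have h4 : (1:ℝ) ≤ 4 ^ n := one_le_pow₀ (by norm_num)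
  have h4p : (0:ℝ) < 4 ^ n := by positivity
  set c : ℝ := 2 * 4 ^ n / β with hc_def
  have hc1 : 1 ≤ c := by
    rw [hc_def, le_div_iff₀ hβ]; nlinarith
  have hcpos : 0 < c := lt_of_lt_of_le one_pos hc1
  set N := ⌈8 * R / ε⌉₊ + 1 with hN_def
  set δ₀ := (M - G) / (2 * c ^ N) with hδ₀_def
  have hcN : (0:ℝ) < c ^ N := by positivity
  have hδ₀ : 0 < δ₀ := div_pos (by linarith) (by positivity)
  set V := volume (ball (0:En n) 1) with hV_def
  have hV0 : 0 < V.toReal :=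
    ENNReal.toReal_pos (measure_ball_pos volume _ one_pos).ne' measure_ball_lt_top.ne
  -- T subset facts
  have hTsub : ball ((2:ℝ)⁻¹ • e) 4⁻¹ ⊆ ball (0:En n) 1 := by
    intro z hz
    have h1 : dist z ((2:ℝ)⁻¹ • e) < 4⁻¹ := mem_ball.1 hz
    have h2 : ‖(2:ℝ)⁻¹ • e‖ = 2⁻¹ := by rw [norm_smul, he]; norm_num
    have h3 : dist z (0:En n) ≤ dist z ((2:ℝ)⁻¹ • e) + dist ((2:ℝ)⁻¹ • e) (0:En n) :=
      dist_triangle _ _ _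
    rw [dist_zero_right, dist_zero_right, h2] at h3
    rw [mem_ball, dist_zero_right]
    rw [mem_ball] at hz
    linarith
  -- the measure-theoretic step
  have step : ∀ δ : ℝ, 0 < δ → ∀ x ∈ Ω, M - δ < v x →
      ∃ y ∈ ball ((2:ℝ)⁻¹ • e) 4⁻¹, M - c * δ < v (x + ε • y) := by
    intro δ hδ x hxΩ hvx
    set f : En n → ℝ := fun y => v (x + ε • y) with hf_def
    have hfmeas : Measurable f :=
      hm.comp ((continuous_const.add (continuous_id.const_smul ε)).measurable)
    have hfint : IntegrableOn f (ball (0:En n) 1) volume := integrableOn_shift hm hb x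
    have hconstint : IntegrableOn (fun _ : En n => M) (ball (0:En n) 1) volume :=
      integrableOn_const measure_ball_lt_top.ne
    have hAv : M - δ / β < ⨍ y in ball (0:En n) 1, f y := by
      have h1 := hkey x hxΩ
      have h2 : β * (M - δ / β) < β * ⨍ y in ball (0:En n) 1, f y := by
        have h3 : β * (M - δ / β) = β * M - δ := by field_simp
        have h4' : v x ≤ α * M + β * ⨍ y in ball (0:En n) 1, f y := h1
        have h5 : α * M + β * M = M := by rw [← add_mul, hαβ, one_mul]
        linarith
      exact (mul_lt_mul_iff_right₀ hβ).1 h2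
    have havg : ⨍ y in ball (0:En n) 1, f y = (V.toReal)⁻¹ * ∫ y in ball (0:En n) 1, f y := by
      rw [setAverage_eq, smul_eq_mul, hV_def, measureReal_def]
    have hintf : V.toReal * (M - δ / β) < ∫ y in ball (0:En n) 1, f y := by
      have := hAv
      rw [havg] at this
      have h5 := (mul_lt_mul_iff_right₀ hV0).2 this
      rwa [mul_inv_cancel_left₀ hV0.ne'] at h5
    have hintM : ∫ y in ball (0:En n) 1, (M - f y) = M * V.toReal - ∫ y in ball (0:En n) 1, f y := by
      rw [integral_sub hconstint hfint, setIntegral_const, smul_eq_mul, measureReal_def, ← hV_def]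
      ring
    have hsmall : ∫ y in ball (0:En n) 1, (M - f y) < V.toReal * (δ / β) := by
      rw [hintM]; nlinarith
    set δ' := c * δ with hδ'_def
    have hδ' : 0 < δ' := mul_pos hcpos hδ
    set B := ball (0:En n) 1 ∩ f ⁻¹' (Iic (M - δ')) with hB_def
    have hBmeas : MeasurableSet B :=
      measurableSet_ball.inter (hfmeas measurableSet_Iic)
    have hBsub : B ⊆ ball (0:En n) 1 := inter_subset_left
    have hBfin : volume B ≠ ⊤ := ((measure_mono hBsub).trans_lt measure_ball_lt_top).ne
    have hlow : δ' * (volume B).toReal ≤ ∫ y in B, (M - f y) := by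
      have hmono2 : ∀ y ∈ B, δ' ≤ M - f y := by
        intro y hy
        have := hy.2
        simp only [Set.mem_preimage, Set.mem_Iic] at this
        linarith
      calc δ' * (volume B).toReal = ∫ _ in B, δ' := by
            rw [setIntegral_const, smul_eq_mul, mul_comm, measureReal_def]
        _ ≤ ∫ y in B, (M - f y) := by
            have hMf : IntegrableOn (fun y => M - f y) (ball (0:En n) 1) volume :=
              hconstint.sub hfint
            exact setIntegral_mono_on (integrableOn_const hBfin)
              (hMf.mono_set hBsub) hBmeas hmono2
    have hmono3 : ∫ y in B, (M - f y) ≤ ∫ y in ball (0:En n) 1, (M - f y) := by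
      have hMf : IntegrableOn (fun y => M - f y) (ball (0:En n) 1) volume :=
        hconstint.sub hfint
      apply setIntegral_mono_set hMf
        (ae_of_all _ fun y => sub_nonneg.2 (hub _))
        (HasSubset.Subset.eventuallyLE hBsub)
    have hvolB : (volume B).toReal < V.toReal / (2 * 4 ^ n) := by
      have heq : δ' * (V.toReal / (2 * 4 ^ n)) = V.toReal * (δ / β) := by
        rw [hδ'_def, hc_def]; field_simp
      have h6 : δ' * (volume B).toReal < δ' * (V.toReal / (2 * 4 ^ n)) := by
        rw [heq]; linarith
      exact (mul_lt_mul_iff_right₀ hδ').1 h6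
    have hTvol : (volume (ball ((2:ℝ)⁻¹ • e) 4⁻¹)).toReal = ((4:ℝ)⁻¹) ^ n * V.toReal := by
      rw [ball_vol hn _ (by norm_num : (0:ℝ) ≤ 4⁻¹), ENNReal.toReal_mul,
        ENNReal.toReal_ofReal (by positivity), finrank_euclideanSpace_fin, hV_def]
    have hTnotsub : ¬ ball ((2:ℝ)⁻¹ • e) 4⁻¹ ⊆ B := by
      intro hsub
      have h1 : volume (ball ((2:ℝ)⁻¹ • e) 4⁻¹) ≤ volume B := measure_mono hsub
      have h2 : (volume (ball ((2:ℝ)⁻¹ • e) 4⁻¹)).toReal ≤ (volume B).toReal :=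
        ENNReal.toReal_mono hBfin h1
      rw [hTvol] at h2
      have h3 : ((4:ℝ)⁻¹) ^ n = ((4:ℝ) ^ n)⁻¹ := inv_pow 4 n
      rw [h3] at h2
      have h9 := mul_le_mul_of_nonneg_left h2 h4p.le
      rw [← mul_assoc, mul_inv_cancel₀ h4p.ne', one_mul] at h9
      rw [lt_div_iff₀ (by positivity : (0:ℝ) < 2 * 4 ^ n)] at hvolB
      have h11 : (0:ℝ) ≤ 4 ^ n * (volume B).toReal :=
        mul_nonneg h4p.le ENNReal.toReal_nonneg
      nlinarith
    obtain ⟨y, hyT, hyB⟩ := not_subset.1 hTnotsub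
    refine ⟨y, hyT, ?_⟩
    have hy1 : y ∈ ball (0:En n) 1 := hTsub hyT
    have hy2 : ¬ (f y ≤ M - δ') := fun h => hyB ⟨hy1, h⟩
    push_neg at hy2
    rw [hδ'_def] at hy2
    exact hy2
  -- the chain
  have hφbound : ∀ z : En n, |⟪z, e⟫| ≤ ‖z‖ := by
    intro z
    have := abs_real_inner_le_norm z e
    rwa [he, mul_one] at this
  have chain : ∀ k : ℕ, ∃ x', M - δ₀ * c ^ k < v x' ∧
      (x' ∉ Ω ∨ (x' ∈ Ω ∧ -R + k * (ε / 4) ≤ ⟪x', e⟫)) := by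
    intro k
    induction k with
    | zero =>
      have h1 : M - δ₀ * c ^ 0 < M := by rw [pow_zero, mul_one]; linarith
      obtain ⟨a, ⟨x₀, rfl⟩, hx₀⟩ := exists_lt_of_lt_csSup ⟨v 0, Set.mem_range_self 0⟩ h1
      by_cases hx₀Ω : x₀ ∈ Ω
      · refine ⟨x₀, hx₀, Or.inr ⟨hx₀Ω, ?_⟩⟩
        have h2 : ‖x₀‖ < R := by
          have := hΩR hx₀Ω; rwa [mem_ball, dist_zero_right] at this
        have h3 := hφbound x₀
        have h4' := neg_abs_le ⟪x₀, e⟫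
        push_cast
        linarith
      · exact ⟨x₀, hx₀, Or.inl hx₀Ω⟩
    | succ k ih =>
      obtain ⟨x', hvx', hcase⟩ := ih
      have hmono : δ₀ * c ^ k ≤ δ₀ * c ^ (k + 1) :=
        mul_le_mul_of_nonneg_left (pow_le_pow_right₀ hc1 (Nat.le_succ k)) hδ₀.le
      rcases hcase with hout' | ⟨hin, hφ⟩
      · exact ⟨x', by linarith, Or.inl hout'⟩
      · obtain ⟨y, hyT, hy⟩ := step (δ₀ * c ^ k) (by positivity) x' hin hvx'
        have hv'' : M - δ₀ * c ^ (k + 1) < v (x' + ε • y) := by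
          have heq : c * (δ₀ * c ^ k) = δ₀ * c ^ (k + 1) := by ring
          rw [heq] at hy
          exact hy
        have hφy : (4:ℝ)⁻¹ < ⟪y, e⟫ := by
          have h1 : ⟪y, e⟫ = ⟪y - (2:ℝ)⁻¹ • e, e⟫ + ⟪(2:ℝ)⁻¹ • e, e⟫ := by
            rw [← inner_add_left, sub_add_cancel]
          have h2 : ⟪(2:ℝ)⁻¹ • e, e⟫ = 2⁻¹ := by
            rw [real_inner_smul_left, real_inner_self_eq_norm_sq, he]; norm_num
          have h3 : |⟪y - (2:ℝ)⁻¹ • e, e⟫| ≤ ‖y - (2:ℝ)⁻¹ • e‖ := hφbound _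
          have h4' : ‖y - (2:ℝ)⁻¹ • e‖ < 4⁻¹ := by
            have := mem_ball.1 hyT; rwa [dist_eq_norm] at this
          have h5 := neg_abs_le ⟪y - (2:ℝ)⁻¹ • e, e⟫
          rw [h1, h2]
          linarith
        have hφ'' : ⟪x' + ε • y, e⟫ = ⟪x', e⟫ + ε * ⟪y, e⟫ := by
          rw [inner_add_left, real_inner_smul_left]
        by_cases hΩ'' : x' + ε • y ∈ Ω
        · refine ⟨x' + ε • y, hv'', Or.inr ⟨hΩ'', ?_⟩⟩
          have h6 : ε * (4:ℝ)⁻¹ ≤ ε * ⟪y, e⟫ := mul_le_mul_of_nonneg_left hφy.le hε.le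
          rw [hφ'']
          push_cast
          linarith
        · exact ⟨x' + ε • y, hv'', Or.inl hΩ''⟩
  -- contradiction at N
  obtain ⟨x', hvx', hcase⟩ := chain N
  have hDN : δ₀ * c ^ N = (M - G) / 2 := by
    rw [hδ₀_def]; field_simp
  rcases hcase with hout' | ⟨hin, hφ⟩
  · have := hout x' hout'
    rw [hDN] at hvx'
    linarith
  · have h2 : ‖x'‖ < R := by
      have := hΩR hin; rwa [mem_ball, dist_zero_right] at this
    have h3 := lt_of_le_of_lt (hφbound x') h2
    have h4' := abs_lt.1 h3
    have h5 : 8 * R / ε ≤ (⌈8 * R / ε⌉₊ : ℝ) := Nat.le_ceil _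
    have h6 : (N:ℝ) = (⌈8 * R / ε⌉₊ : ℝ) + 1 := by rw [hN_def]; push_cast; ring
    have h7 : 8 * R / ε * (ε / 4) = 2 * R := by field_simp; ring
    have h8 : (N:ℝ) * (ε / 4) ≥ 2 * R := by
      rw [h6]
      have h9 : ((⌈8 * R / ε⌉₊ : ℝ) + 1) * (ε / 4) ≥ (8 * R / ε) * (ε / 4) := by
        apply mul_le_mul_of_nonneg_right (by linarith) (by linarith)
      linarith [h7 ▸ h9]
    linarith


variable {n : ℕ}

lemma recur {Ω : Set (En n)} (hΩo : IsOpen Ω) {α β ε : ℝ} (hα : 0 ≤ α) (hβ0 : 0 ≤ β)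
    (hε : 0 < ε) {u : En n → ℝ} {G : ℝ} (hb : ∀ x, |u x| ≤ G)
    (hdpp : ∀ x ∈ Ω, u x =
      α * sSup ((fun ν => (u (x + ε • ν) + u (x - ε • ν)) / 2) '' ball (0 : En n) 1) +
        β * ⨍ y in ball (0 : En n) 1, u (x + ε • y))
    (hA : Continuous fun x : En n => ⨍ y in ball (0 : En n) 1, u (x + ε • y))
    {x : En n} (hx : x ∈ Ω) {C η r : ℝ} (hη : 0 < η) (hr : 0 < r)
    (hC : ∀ z ∈ closedBall x ε, oscB u z r ≤ C) :
    ∃ r' > 0, oscB u x r' ≤ α * C + η := by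
  classical
  set A := fun x : En n => ⨍ y in ball (0 : En n) 1, u (x + ε • y) with hA_def
  set S := fun x : En n =>
    sSup ((fun ν => (u (x + ε • ν) + u (x - ε • ν)) / 2) '' ball (0 : En n) 1) with hS_def
  obtain ⟨r₂, hr₂, hball⟩ : ∃ r₂ > 0, ball x r₂ ⊆ Ω := by
    rcases Metric.isOpen_iff.1 hΩo x hx with ⟨r₂, h1, h2⟩
    exact ⟨r₂, h1, h2⟩
  set η' := η / (4 * (β + 1)) with hη'_def
  have hη' : 0 < η' := by positivity
  obtain ⟨r₃, hr₃, hAc⟩ : ∃ r₃ > 0, ∀ x' ∈ ball x r₃, |A x' - A x| ≤ η' := by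
    have := Metric.continuousAt_iff.1 (hA.continuousAt (x := x)) η' hη'
    rcases this with ⟨δ, hδ, hd⟩
    refine ⟨δ, hδ, fun x' hx' => ?_⟩
    have := hd (mem_ball.1 hx')
    rw [Real.dist_eq] at this
    exact this.le
  set ρ := min r (min r₂ r₃) with hρ_def
  have hρ : 0 < ρ := lt_min hr (lt_min hr₂ hr₃)
  have hρr : ρ ≤ r := min_le_left _ _
  have hρ2 : ρ ≤ r₂ := le_trans (min_le_right _ _) (min_le_left _ _)
  have hρ3 : ρ ≤ r₃ := le_trans (min_le_right _ _) (min_le_right _ _)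
  -- bdd facts for S-images
  have hSbddAbove : ∀ c : En n, BddAbove
      ((fun ν => (u (c + ε • ν) + u (c - ε • ν)) / 2) '' ball (0 : En n) 1) := by
    intro c
    refine ⟨G, ?_⟩
    rintro _ ⟨ν, -, rfl⟩
    have h1 := (abs_le.1 (hb (c + ε • ν))).2
    have h2 := (abs_le.1 (hb (c - ε • ν))).2
    dsimp only
    linarith
  have hSne : ∀ c : En n,
      ((fun ν => (u (c + ε • ν) + u (c - ε • ν)) / 2) '' ball (0 : En n) 1).Nonempty :=
    fun c => ⟨_, ⟨0, mem_ball_self one_pos, rfl⟩⟩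
  have key : ∀ x' ∈ ball x ρ, ∀ x'' ∈ ball x ρ, u x' ≤ u x'' + (α * C + η / 2) := by
    intro x' hx' x'' hx''
    have hx'Ω : x' ∈ Ω := hball (mem_ball.2 (lt_of_lt_of_le (mem_ball.1 hx') hρ2))
    have hx''Ω : x'' ∈ Ω := hball (mem_ball.2 (lt_of_lt_of_le (mem_ball.1 hx'') hρ2))
    have hS' : S x' ≤ S x'' + C := by
      apply csSup_le (hSne x')
      rintro _ ⟨ν, hν, rfl⟩
      have hzmem : x + ε • ν ∈ closedBall x ε := by
        rw [mem_closedBall, dist_eq_norm]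
        have : x + ε • ν - x = ε • ν := by abel
        rw [this, norm_smul, Real.norm_eq_abs, abs_of_pos hε]
        have := mem_ball.1 hν
        rw [dist_zero_right] at this
        nlinarith
      have hzmem2 : x - ε • ν ∈ closedBall x ε := by
        rw [mem_closedBall, dist_eq_norm]
        have : x - ε • ν - x = -(ε • ν) := by abel
        rw [this, norm_neg, norm_smul, Real.norm_eq_abs, abs_of_pos hε]
        have := mem_ball.1 hν
        rw [dist_zero_right] at this
        nlinarith
      have hmem1 : x' + ε • ν ∈ ball (x + ε • ν) r := by
        rw [mem_ball, dist_eq_norm]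
        have : x' + ε • ν - (x + ε • ν) = x' - x := by abel
        rw [this, ← dist_eq_norm]
        exact lt_of_lt_of_le (mem_ball.1 hx') hρr
      have hmem1' : x'' + ε • ν ∈ ball (x + ε • ν) r := by
        rw [mem_ball, dist_eq_norm]
        have : x'' + ε • ν - (x + ε • ν) = x'' - x := by abel
        rw [this, ← dist_eq_norm]
        exact lt_of_lt_of_le (mem_ball.1 hx'') hρr
      have hmem2 : x' - ε • ν ∈ ball (x - ε • ν) r := by
        rw [mem_ball, dist_eq_norm]
        have : x' - ε • ν - (x - ε • ν) = x' - x := by abel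
        rw [this, ← dist_eq_norm]
        exact lt_of_lt_of_le (mem_ball.1 hx') hρr
      have hmem2' : x'' - ε • ν ∈ ball (x - ε • ν) r := by
        rw [mem_ball, dist_eq_norm]
        have : x'' - ε • ν - (x - ε • ν) = x'' - x := by abel
        rw [this, ← dist_eq_norm]
        exact lt_of_lt_of_le (mem_ball.1 hx'') hρr
      have hosc1 := hC _ hzmem
      have hosc2 := hC _ hzmem2
      have ha1 : u (x' + ε • ν) ≤ sSup (u '' ball (x + ε • ν) r) :=
        le_csSup (bddAbove_im hb _) ⟨_, hmem1, rfl⟩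
      have ha2 : sInf (u '' ball (x + ε • ν) r) ≤ u (x'' + ε • ν) :=
        csInf_le (bddBelow_im hb _) ⟨_, hmem1', rfl⟩
      have hb1 : u (x' - ε • ν) ≤ sSup (u '' ball (x - ε • ν) r) :=
        le_csSup (bddAbove_im hb _) ⟨_, hmem2, rfl⟩
      have hb2 : sInf (u '' ball (x - ε • ν) r) ≤ u (x'' - ε • ν) :=
        csInf_le (bddBelow_im hb _) ⟨_, hmem2', rfl⟩
      have helem : (u (x'' + ε • ν) + u (x'' - ε • ν)) / 2 ≤ S x'' :=
        le_csSup (hSbddAbove x'') ⟨ν, hν, rfl⟩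
      unfold oscB at hosc1 hosc2
      dsimp only
      linarith
    have hA2 : A x' - A x'' ≤ 2 * η' := by
      have h1 := hAc x' (mem_ball.2 (lt_of_lt_of_le (mem_ball.1 hx') hρ3))
      have h2 := hAc x'' (mem_ball.2 (lt_of_lt_of_le (mem_ball.1 hx'') hρ3))
      have h3 := abs_le.1 h1
      have h4 := abs_le.1 h2
      linarith
    have e1 : u x' = α * S x' + β * A x' := hdpp x' hx'Ω
    have e2 : u x'' = α * S x'' + β * A x'' := hdpp x'' hx''Ω
    have hm1 : α * S x' ≤ α * (S x'' + C) := mul_le_mul_of_nonneg_left hS' hα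
    have hm2 : β * (A x' - A x'') ≤ β * (2 * η') := mul_le_mul_of_nonneg_left hA2 hβ0
    have hβη : β * (2 * η') ≤ η / 2 := by
      rw [hη'_def]
      have h1 : β * (2 * (η / (4 * (β + 1)))) = (β / (β + 1)) * (η / 2) := by
        field_simp
        ring
      have h2 : β / (β + 1) ≤ 1 := by
        rw [div_le_one (by linarith)]; linarith
      rw [h1]
      exact mul_le_of_le_one_left (by positivity) h2
    nlinarith
  refine ⟨ρ, hρ, ?_⟩
  have hne : (u '' ball x ρ).Nonempty := ⟨u x, x, mem_ball_self hρ, rfl⟩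
  have h1 : ∀ x' ∈ ball x ρ, u x' - (α * C + η / 2) ≤ sInf (u '' ball x ρ) := by
    intro x' hx'
    apply le_csInf hne
    rintro _ ⟨x'', hx'', rfl⟩
    linarith [key x' hx' x'' hx'']
  have h2 : sSup (u '' ball x ρ) ≤ sInf (u '' ball x ρ) + (α * C + η / 2) := by
    apply csSup_le hne
    rintro _ ⟨x', hx', rfl⟩
    linarith [h1 x' hx']
  unfold oscB
  linarith


end Stmt10Aux

/-- size of the jumps for the DPP `L⁺_ε u = 0`. -/
theorem stmt10 (n : ℕ) (hn : 1 ≤ n) (Ω : Set (En n)) (hΩo : IsOpen Ω) (hΩconn : IsConnected Ω)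
    (hΩb : Bornology.IsBounded Ω)
    (α β ε : ℝ) (hα : 0 ≤ α) (hα1 : α < 1) (hβ : β = 1 - α) (hε : 0 < ε)
    (g : En n → ℝ) (hgm : Measurable g) (hgb : ∃ M : ℝ, ∀ x, |g x| ≤ M)
    (u : En n → ℝ) (hu : BddBorel u)
    (hbdry : ∀ x ∉ Ω, u x = g x)
    (hdpp : ∀ x ∈ Ω, u x =
      α * sSup ((fun ν => (u (x + ε • ν) + u (x - ε • ν)) / 2) '' ball (0 : En n) 1) +
        β * ⨍ y in ball (0 : En n) 1, u (x + ε • y)) :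
    ∀ x ∈ Ω,
      Filter.limsup u (𝓝[≠] x) - Filter.liminf u (𝓝[≠] x) ≤
        2 * supNormOn g Ωᶜ * α ^ ⌈Metric.infDist x (frontier Ω) / ε⌉₊ := by
  classical
  haveI hfne : Nonempty (Fin n) := ⟨⟨0, hn⟩⟩
  haveI : Nontrivial (En n) := by infer_instance
  obtain ⟨hum, Mu, hub⟩ := hu
  obtain ⟨Mg, hgB⟩ := hgb
  have hβpos : 0 < β := by rw [hβ]; linarith
  have hβ1 : β ≤ 1 := by rw [hβ]; linarith
  have hαβ : α + β = 1 := by rw [hβ]; ring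
  -- a radius bound for Ω
  obtain ⟨R₀, hR₀⟩ := (Metric.isBounded_iff_subset_ball (0 : En n)).1 hΩb
  set R : ℝ := max R₀ 1 with hR_def
  have hR : 0 < R := lt_of_lt_of_le one_pos (le_max_right _ _)
  have hΩR : Ω ⊆ ball (0 : En n) R :=
    hR₀.trans (ball_subset_ball (le_max_left _ _))
  -- the sup norm of g on the complement
  set G : ℝ := supNormOn g Ωᶜ with hG_def
  have hGim : G = sSup ((fun x => |g x|) '' Ωᶜ) := rfl
  have hGbddA : BddAbove ((fun x => |g x|) '' Ωᶜ) :=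
    ⟨Mg, by rintro _ ⟨y, -, rfl⟩; exact hgB y⟩
  have hGout : ∀ x ∉ Ω, |u x| ≤ G := by
    intro x hx
    rw [hbdry x hx, hGim]
    exact le_csSup hGbddA ⟨x, hx, rfl⟩
  -- a point outside Ω
  have hptout : (R • EuclideanSpace.single (⟨0, hn⟩ : Fin n) (1:ℝ)) ∉ Ω := by
    intro h
    have h1 := hΩR h
    rw [mem_ball, dist_zero_right, norm_smul, Real.norm_eq_abs, abs_of_pos hR,
      EuclideanSpace.norm_single, norm_one, mul_one] at h1
    exact lt_irrefl _ h1
  have hG0 : 0 ≤ G := le_trans (abs_nonneg _) (hGout _ hptout)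
  -- global bound |u| ≤ G via the maximum principle
  have hbAll : ∀ x, |u x| ≤ G := by
    have hkey1 : ∀ x ∈ Ω, u x ≤ α * sSup (Set.range u) +
        β * ⨍ y in ball (0:En n) 1, u (x + ε • y) := by
      intro x hx
      rw [hdpp x hx]
      have hbddr : BddAbove (Set.range u) := ⟨Mu, by rintro _ ⟨y, rfl⟩; exact (abs_le.1 (hub y)).2⟩
      have hS : sSup ((fun ν => (u (x + ε • ν) + u (x - ε • ν)) / 2) '' ball (0 : En n) 1)
          ≤ sSup (Set.range u) := by
        refine csSup_le ⟨(u (x + ε • (0:En n)) + u (x - ε • (0:En n))) / 2,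
          ⟨0, mem_ball_self one_pos, rfl⟩⟩ ?_
        rintro _ ⟨ν, -, rfl⟩
        have h1 : u (x + ε • ν) ≤ sSup (Set.range u) := le_csSup hbddr (Set.mem_range_self _)
        have h2 : u (x - ε • ν) ≤ sSup (Set.range u) := le_csSup hbddr (Set.mem_range_self _)
        dsimp only
        linarith
      have := mul_le_mul_of_nonneg_left hS hα
      linarith
    have h1 : ∀ x, u x ≤ G :=
      Stmt10Aux.maxpr hn hR hΩR hα hβpos hβ1 hαβ hε hum hub
        (fun x hx => (abs_le.1 (hGout x hx)).2) hkey1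
    have hkey2 : ∀ x ∈ Ω, (fun z => -u z) x ≤ α * sSup (Set.range (fun z => -u z)) +
        β * ⨍ y in ball (0:En n) 1, (fun z => -u z) (x + ε • y) := by
      intro x hx
      have e0 := hdpp x hx
      have hbddr : BddAbove (Set.range (fun z => -u z)) :=
        ⟨Mu, by rintro _ ⟨y, rfl⟩; dsimp only; linarith [(abs_le.1 (hub y)).1]⟩
      have hAvneg : (⨍ y in ball (0:En n) 1, (fun z => -u z) (x + ε • y))
          = -⨍ y in ball (0:En n) 1, u (x + ε • y) := by
        rw [setAverage_eq, setAverage_eq, ← smul_neg, ← integral_neg]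
      have hSelem : u x ≤ sSup ((fun ν => (u (x + ε • ν) + u (x - ε • ν)) / 2) '' ball (0 : En n) 1) := by
        have hmem : u x = (fun ν => (u (x + ε • ν) + u (x - ε • ν)) / 2) (0 : En n) := by
          dsimp only; rw [smul_zero, add_zero, sub_zero]; ring
        rw [hmem]
        exact le_csSup (by
          refine ⟨Mu, ?_⟩
          rintro _ ⟨ν, -, rfl⟩
          have h1 := (abs_le.1 (hub (x + ε • ν))).2
          have h2 := (abs_le.1 (hub (x - ε • ν))).2
          dsimp only
          linarith) ⟨0, mem_ball_self one_pos, rfl⟩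
      have hSM : -sSup ((fun ν => (u (x + ε • ν) + u (x - ε • ν)) / 2) '' ball (0 : En n) 1)
          ≤ sSup (Set.range (fun z => -u z)) := by
        have h3 : -u x ≤ sSup (Set.range (fun z => -u z)) := le_csSup hbddr (Set.mem_range_self x)
        linarith
      have h4 := mul_le_mul_of_nonneg_left hSM hα
      rw [hAvneg]
      dsimp only
      linarith
    have h2 : ∀ x, -u x ≤ G := by
      have := Stmt10Aux.maxpr hn hR hΩR hα hβpos hβ1 hαβ hε hum.neg
        (Mb := Mu) (fun x => by rw [Pi.neg_apply, abs_neg]; exact hub x)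
        (fun x hx => by have h9 := (abs_le.1 (hGout x hx)).1; show -u x ≤ G; linarith) hkey2
      exact this
    intro x
    exact abs_le.2 ⟨by linarith [h2 x], h1 x⟩
  -- continuity of the averaging term
  have hAcont : Continuous fun c : En n => ⨍ y in ball (0:En n) 1, u (c + ε • y) := by
    have heq : (fun c : En n => ⨍ y in ball (0:En n) 1, u (c + ε • y))
        = fun c => (volume (ball (0:En n) 1)).toReal⁻¹ *
            ((ε ^ Module.finrank ℝ (En n))⁻¹ * ∫ z in ball c ε, u z) :=
      funext fun c => Stmt10Aux.avg_eq hn hum hε c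
    rw [heq]
    exact continuous_const.mul (continuous_const.mul (Stmt10Aux.F_cont hn hum hbAll hε))
  -- main induction on the number of ε-steps to the boundary
  have key : ∀ k : ℕ, ∀ z ∈ Ω, (k:ℝ) * ε < Metric.infDist z (frontier Ω) + ε →
      ∀ η > 0, ∃ r > 0, Stmt10Aux.oscB u z r ≤ 2 * G * α ^ k + η := by
    intro k
    induction k with
    | zero =>
      intro z _ _ η hη
      refine ⟨1, one_pos, ?_⟩
      have := Stmt10Aux.oscB_le_2G hbAll z one_pos
      rw [pow_zero]
      linarith
    | succ k ih =>
      intro z hz hdist η hη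
      have hzk : (k:ℝ) * ε < Metric.infDist z (frontier Ω) := by
        push_cast at hdist
        linarith
      have hunif : ∀ w ∈ closedBall z ε, ∃ r > 0,
          Stmt10Aux.oscB u w (2 * r) ≤ 2 * G * α ^ k + η / 2 := by
        intro w hw
        rcases Nat.eq_zero_or_pos k with rfl | hk
        · refine ⟨1, one_pos, ?_⟩
          have h9 := Stmt10Aux.oscB_le_2G hbAll w (by norm_num : (0:ℝ) < 2 * 1)
          rw [pow_zero]
          calc Stmt10Aux.oscB u w (2 * 1) ≤ 2 * G := h9
            _ ≤ 2 * G * 1 + η / 2 := by linarith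
        · have hk1 : (1:ℝ) ≤ (k:ℝ) := by exact_mod_cast hk
          have hεlt : ε < Metric.infDist z (frontier Ω) := by nlinarith
          have hwΩ : w ∈ Ω := by
            apply Stmt10Aux.ball_subset_of_infDist_frontier hΩo hz (le_refl _)
            rw [mem_ball]
            exact lt_of_le_of_lt (mem_closedBall.1 hw) hεlt
          have hwd : (k:ℝ) * ε < Metric.infDist w (frontier Ω) + ε := by
            have h5 : Metric.infDist z (frontier Ω) ≤
                Metric.infDist w (frontier Ω) + dist z w := Metric.infDist_le_infDist_add_dist
            have h6 : dist z w ≤ ε := by rw [dist_comm]; exact mem_closedBall.1 hw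
            linarith
          obtain ⟨r, hr, ho⟩ := ih w hwΩ hwd (η/2) (by positivity)
          refine ⟨r/2, by positivity, ?_⟩
          have h2 : 2 * (r/2) = r := by ring
          rw [h2]
          exact ho
      obtain ⟨r, hrpos, hunifC⟩ := Stmt10Aux.unif hbAll (isCompact_closedBall z ε) hunif
      obtain ⟨r', hr', ho⟩ := Stmt10Aux.recur hΩo hα (by linarith : (0:ℝ) ≤ β) hε hbAll hdpp
        hAcont hz (by positivity : (0:ℝ) < η/2) hrpos hunifC
      refine ⟨r', hr', ?_⟩
      have heq2 : α * (2 * G * α ^ k + η / 2) = 2 * G * α ^ (k+1) + α * (η/2) := by ring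
      have h7 : α * (η/2) ≤ η/2 :=
        mul_le_of_le_one_left (by positivity) hα1.le
      rw [heq2] at ho
      linarith
  -- conclude
  intro x hx
  set d := Metric.infDist x (frontier Ω) with hd_def
  set k := ⌈d / ε⌉₊ with hk_def
  have hd0 : 0 ≤ d := Metric.infDist_nonneg
  have hcond : (k:ℝ) * ε < d + ε := by
    have h1 : (k:ℝ) < d / ε + 1 := Nat.ceil_lt_add_one (by positivity)
    have h2 := mul_lt_mul_of_pos_right h1 hε
    rwa [add_mul, div_mul_cancel₀ _ hε.ne', one_mul] at h2
  haveI : (𝓝[≠] x).NeBot := Module.punctured_nhds_neBot ℝ (En n) x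
  have hlim : ∀ r > 0, Filter.limsup u (𝓝[≠] x) - Filter.liminf u (𝓝[≠] x) ≤
      Stmt10Aux.oscB u x r := by
    intro r hr
    have h0 : ball x r ∈ 𝓝 x := ball_mem_nhds x hr
    have h1 : ball x r ∈ 𝓝[≠] x := nhdsWithin_le_nhds h0
    have hev : ∀ᶠ y in 𝓝[≠] x, y ∈ ball x r := Filter.eventually_iff.2 h1
    have hup : Filter.limsup u (𝓝[≠] x) ≤ sSup (u '' ball x r) := by
      apply Filter.limsup_le_of_le
      · have hbu : Filter.IsBoundedUnder (· ≥ ·) (𝓝[≠] x) u :=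
          ⟨-G, Filter.eventually_map.2 (Filter.Eventually.of_forall
            fun y => (abs_le.1 (hbAll y)).1)⟩
        exact hbu.isCoboundedUnder_le
      · filter_upwards [hev] with y hy
        exact le_csSup (Stmt10Aux.bddAbove_im hbAll _) ⟨y, hy, rfl⟩
    have hlo : sInf (u '' ball x r) ≤ Filter.liminf u (𝓝[≠] x) := by
      apply Filter.le_liminf_of_le
      · have hbu : Filter.IsBoundedUnder (· ≤ ·) (𝓝[≠] x) u :=
          ⟨G, Filter.eventually_map.2 (Filter.Eventually.of_forall
            fun y => (abs_le.1 (hbAll y)).2)⟩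
        exact hbu.isCoboundedUnder_ge
      · filter_upwards [hev] with y hy
        exact csInf_le (Stmt10Aux.bddBelow_im hbAll _) ⟨y, hy, rfl⟩
    unfold Stmt10Aux.oscB
    linarith
  show Filter.limsup u (𝓝[≠] x) - Filter.liminf u (𝓝[≠] x) ≤ 2 * G * α ^ k
  apply le_of_forall_pos_le_add
  intro η hη
  obtain ⟨r, hr, ho⟩ := key k x hx hcond η hη
  linarith [hlim r hr]
end

section
/- Let Ω ⊂ ℝⁿ be a bounded domain, let 0 ≤ α < 1, β = 1 − α, ε > 0, let g : ℝⁿ∖Ω → ℝ be a bounded Borel function, and let u : ℝⁿ → ℝ be a bounded Borel function such that u(x) = g(x) for x ∈ ℝⁿ∖Ω and u(x) = (α/2)·(sup_{B_ε(x)} u + inf_{B_ε(x)} u) + β·⨍_{B_ε(x)} u(y) dy for every x ∈ Ω (the dynamic programming principle of the tug-of-war with noise). Then for every x ∈ Ω the jump of u at x satisfies limsup_{y→x} u(y) − liminf_{y→x} u(y) ≤ 2·‖g‖_{L∞(ℝⁿ∖Ω)}·α^{⌈dist(x,∂Ω)/ε⌉}. -/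
open MeasureTheory Metric Filter Topology

noncomputable section AuxStmt11

open MeasureTheory Metric Filter Topology Set

variable {n : ℕ}


lemma intOn (u : En n → ℝ) (hum : Measurable u) {M : ℝ} (hub : ∀ x, |u x| ≤ M)
    (x : En n) (r : ℝ) : IntegrableOn u (ball x r) := by
  have : IsFiniteMeasure (volume.restrict (ball x r)) :=
    ⟨by rw [Measure.restrict_apply_univ]; exact measure_ball_lt_top⟩
  exact ⟨hum.aestronglyMeasurable.restrict,
    HasFiniteIntegral.of_bounded (C := M) (Eventually.of_forall fun y => by
      simpa [Real.norm_eq_abs] using hub y)⟩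

lemma contA {ε M : ℝ} (hε : 0 < ε) (u : En n → ℝ) (hum : Measurable u)
    (hub : ∀ x, |u x| ≤ M) : Continuous fun x : En n => ⨍ y in ball x ε, u y := by
  have hM0 : 0 ≤ M := le_trans (abs_nonneg _) (hub 0)
  set m := Module.finrank ℝ (En n)
  set v1 : ℝ := (volume (ball (0 : En n) 1)).toReal with hv1
  have hv : ∀ r : ℝ, 0 < r → (volume (ball (0 : En n) r)).toReal = r ^ m * v1 := by
    intro r hr
    rw [Measure.addHaar_ball_of_pos _ _ hr, ENNReal.toReal_mul,
      ENNReal.toReal_ofReal (by positivity)]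
  have key : ∀ x z : En n, |(∫ y in ball z ε, u y) - ∫ y in ball x ε, u y| ≤
      2 * M * (((ε + dist z x) ^ m - ε ^ m) * v1) := by
    intro x z
    have hsub : ∀ a b : En n, dist a b ≤ dist z x →
        (volume (ball a ε \ ball b ε)).toReal ≤ ((ε + dist z x) ^ m - ε ^ m) * v1 := by
      intro a b hab
      have h1 : ball a ε \ ball b ε ⊆ ball b (ε + dist z x) \ ball b ε := by
        intro y hy
        refine ⟨?_, hy.2⟩
        calc dist y b ≤ dist y a + dist a b := dist_triangle _ _ _
          _ < ε + dist z x := add_lt_add_of_lt_of_le hy.1 hab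
      have h2 : (volume (ball b (ε + dist z x) \ ball b ε)).toReal =
          ((ε + dist z x) ^ m - ε ^ m) * v1 := by
        rw [measure_diff (ball_subset_ball (by linarith [dist_nonneg (x := z) (y := x)]))
          measurableSet_ball.nullMeasurableSet measure_ball_lt_top.ne]
        rw [ENNReal.toReal_sub_of_le (measure_mono (ball_subset_ball
          (by linarith [dist_nonneg (x := z) (y := x)]))) measure_ball_lt_top.ne]
        rw [Measure.addHaar_ball_center volume b (ε + dist z x),
          Measure.addHaar_ball_center volume b ε]
        rw [hv _ (by linarith [dist_nonneg (x := z) (y := x)]), hv _ hε, sub_mul]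
      calc (volume (ball a ε \ ball b ε)).toReal
          ≤ (volume (ball b (ε + dist z x) \ ball b ε)).toReal := by
            apply ENNReal.toReal_mono (by
              exact (measure_mono (diff_subset.trans (ball_subset_ball (le_refl _)))).trans_lt
                measure_ball_lt_top |>.ne)
            exact measure_mono h1
        _ = _ := h2
    have hdecomp : (∫ y in ball z ε, u y) - ∫ y in ball x ε, u y =
        (∫ y in ball z ε \ ball x ε, u y) - ∫ y in ball x ε \ ball z ε, u y := by
      have hz := intOn u hum hub z ε
      have hx := intOn u hum hub x ε
      rw [← integral_inter_add_diff (s := ball z ε) (t := ball x ε) measurableSet_ball hz,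
        ← integral_inter_add_diff (s := ball x ε) (t := ball z ε) measurableSet_ball hx]
      rw [Set.inter_comm (ball x ε) (ball z ε)]
      ring
    rw [hdecomp]
    have hb1 : |∫ y in ball z ε \ ball x ε, u y| ≤ M * ((ε + dist z x) ^ m - ε ^ m) * v1 := by
      have := norm_setIntegral_le_of_norm_le_const (μ := volume)
        (s := ball z ε \ ball x ε) (f := u) (C := M)
        ((measure_mono diff_subset).trans_lt measure_ball_lt_top)
        (fun y _ => by simpa [Real.norm_eq_abs] using hub y)
      rw [Real.norm_eq_abs] at this
      calc |∫ y in ball z ε \ ball x ε, u y| ≤ M * (volume (ball z ε \ ball x ε)).toReal := this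
        _ ≤ M * (((ε + dist z x) ^ m - ε ^ m) * v1) :=
            mul_le_mul_of_nonneg_left (hsub z x (le_refl _)) hM0
        _ = _ := by ring
    have hb2 : |∫ y in ball x ε \ ball z ε, u y| ≤ M * ((ε + dist z x) ^ m - ε ^ m) * v1 := by
      have := norm_setIntegral_le_of_norm_le_const (μ := volume)
        (s := ball x ε \ ball z ε) (f := u) (C := M)
        ((measure_mono diff_subset).trans_lt measure_ball_lt_top)
        (fun y _ => by simpa [Real.norm_eq_abs] using hub y)
      rw [Real.norm_eq_abs] at this
      calc |∫ y in ball x ε \ ball z ε, u y| ≤ M * (volume (ball x ε \ ball z ε)).toReal := this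
        _ ≤ M * (((ε + dist z x) ^ m - ε ^ m) * v1) := by
            refine mul_le_mul_of_nonneg_left ?_ hM0
            have := hsub x z (by rw [dist_comm])
            exact this
        _ = _ := by ring
    calc |(∫ y in ball z ε \ ball x ε, u y) - ∫ y in ball x ε \ ball z ε, u y|
        ≤ |∫ y in ball z ε \ ball x ε, u y| + |∫ y in ball x ε \ ball z ε, u y| := abs_sub _ _
      _ ≤ M * ((ε + dist z x) ^ m - ε ^ m) * v1 + M * ((ε + dist z x) ^ m - ε ^ m) * v1 :=
          add_le_add hb1 hb2
      _ = 2 * M * (((ε + dist z x) ^ m - ε ^ m) * v1) := by ring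
  -- continuity of the integral
  have hI : Continuous fun x : En n => ∫ y in ball x ε, u y := by
    rw [continuous_iff_continuousAt]
    intro x
    have hphi : Tendsto (fun z : En n => 2 * M * (((ε + dist z x) ^ m - ε ^ m) * v1))
        (𝓝 x) (𝓝 0) := by
      have : Continuous fun z : En n => 2 * M * (((ε + dist z x) ^ m - ε ^ m) * v1) := by
        fun_prop
      have h0 : (2 * M * (((ε + dist x x) ^ m - ε ^ m) * v1)) = 0 := by simp
      simpa [h0] using this.tendsto x
    rw [ContinuousAt, tendsto_iff_dist_tendsto_zero]
    apply squeeze_zero (fun z => dist_nonneg)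
      (fun z => by rw [Real.dist_eq]; exact key x z) hphi
  have hAeq : ∀ x : En n, (⨍ y in ball x ε, u y) =
      (volume (ball (0 : En n) ε)).toReal⁻¹ * ∫ y in ball x ε, u y := by
    intro x
    rw [setAverage_eq, measureReal_def, Measure.addHaar_ball_center, smul_eq_mul]
  simp only [hAeq]
  exact continuous_const.mul hI


lemma avg_le (u : En n → ℝ) (hum : Measurable u) {M : ℝ} (hub : ∀ x, |u x| ≤ M)
    {c : ℝ} (hc : ∀ y, u y ≤ c) (x : En n) {r : ℝ} (hr : 0 < r) :
    ⨍ y in ball x r, u y ≤ c := by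
  rw [setAverage_eq, measureReal_def, smul_eq_mul]
  set t := (volume (ball x r)).toReal with ht
  have htpos : 0 < t := by
    apply ENNReal.toReal_pos (measure_ball_pos volume x hr).ne' measure_ball_lt_top.ne
  have hint : (∫ y in ball x r, u y) ≤ c * t := by
    calc (∫ y in ball x r, u y) ≤ ∫ _y in ball x r, c :=
          setIntegral_mono_on (intOn u hum hub x r) (integrableOn_const
            measure_ball_lt_top.ne) measurableSet_ball (fun y _ => hc y)
      _ = c * t := by rw [setIntegral_const, smul_eq_mul, mul_comm, measureReal_def, ← ht]
  calc t⁻¹ * ∫ y in ball x r, u y ≤ t⁻¹ * (c * t) := by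
        exact mul_le_mul_of_nonneg_left hint (inv_nonneg.2 htpos.le)
    _ = c := by field_simp

lemma ae_eq_const (u : En n → ℝ) (hum : Measurable u) {M : ℝ} (hub : ∀ x, |u x| ≤ M)
    {c : ℝ} (hc : ∀ y, u y ≤ c) (x : En n) {r : ℝ} (hr : 0 < r)
    (havg : ⨍ y in ball x r, u y = c) :
    ∀ᵐ y ∂(volume.restrict (ball x r)), u y = c := by
  set t := (volume (ball x r)).toReal with ht
  have htpos : 0 < t := by
    apply ENNReal.toReal_pos (measure_ball_pos volume x hr).ne' measure_ball_lt_top.ne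
  have hIu := intOn u hum hub x r
  have hIc : IntegrableOn (fun _ => c) (ball x r) volume :=
    integrableOn_const measure_ball_lt_top.ne
  have hInt : ∫ y in ball x r, u y = c * t := by
    rw [setAverage_eq, measureReal_def, smul_eq_mul] at havg
    have : t * (t⁻¹ * ∫ y in ball x r, u y) = t * c := by rw [havg]
    rw [← mul_assoc, mul_inv_cancel₀ htpos.ne', one_mul] at this
    rw [this, mul_comm]
  have hzero : ∫ y in ball x r, (c - u y) = 0 := by
    rw [integral_sub hIc hIu, setIntegral_const, measureReal_def, smul_eq_mul, mul_comm, hInt, sub_self]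
  have := (setIntegral_eq_zero_iff_of_nonneg_ae
    (Eventually.of_forall fun y => sub_nonneg.2 (hc y)) (hIc.sub hIu)).mp hzero
  filter_upwards [this] with y hy
  have : c - u y = 0 := hy
  linarith

lemma exM (u : En n → ℝ) (hum : Measurable u) {c : ℝ} {y : En n} {r : ℝ}
    {V : Set (En n)} (hV : IsOpen V) (hVne : V.Nonempty) (hVsub : V ⊆ ball y r)
    (hae : ∀ᵐ w ∂(volume.restrict (ball y r)), u w = c) : ∃ w ∈ V, u w = c := by
  have hmeas : MeasurableSet {w : En n | ¬ u w = c} :=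
    ((hum (measurableSet_singleton c)).compl :)
  have hnull : volume ({w : En n | ¬ u w = c} ∩ ball y r) = 0 := by
    have := hae
    rw [ae_iff, Measure.restrict_apply hmeas] at this
    exact this
  by_contra hcon
  push_neg at hcon
  have hVsub' : V ⊆ {w : En n | ¬ u w = c} ∩ ball y r := fun w hw => ⟨hcon w hw, hVsub hw⟩
  have : volume V = 0 := le_antisymm (hnull ▸ measure_mono hVsub') zero_le
  exact (hV.measure_pos volume hVne).ne' this

lemma maxPrinciple (hn : 1 ≤ n) (Ω : Set (En n)) (hΩo : IsOpen Ω) (hΩconn : IsConnected Ω)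
    (hΩb : Bornology.IsBounded Ω) (α β ε : ℝ) (hα : 0 ≤ α) (hα1 : α < 1) (hβ : β = 1 - α)
    (hε : 0 < ε) (g : En n → ℝ) (hgb : ∃ M : ℝ, ∀ x, |g x| ≤ M)
    (u : En n → ℝ) (hum : Measurable u) {Mu : ℝ} (hub : ∀ x, |u x| ≤ Mu)
    (hbdry : ∀ x ∉ Ω, u x = g x)
    (hdpp : ∀ x ∈ Ω, u x =
      α / 2 * (sSup (u '' ball x ε) + sInf (u '' ball x ε)) + β * ⨍ y in ball x ε, u y) :
    ∀ x, u x ≤ sSup ((fun x => |g x|) '' Ωᶜ) := by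
  obtain ⟨Mg, hMg⟩ := hgb
  set Gn := sSup ((fun x => |g x|) '' Ωᶜ) with hGn
  have hβpos : 0 < β := by rw [hβ]; linarith
  have hGnle : ∀ w, w ∉ Ω → |g w| ≤ Gn := by
    intro w hw
    exact le_csSup ⟨Mg, by rintro _ ⟨z, hz, rfl⟩; exact hMg z⟩ ⟨w, hw, rfl⟩
  have hMub : BddAbove (Set.range u) := ⟨Mu, by rintro _ ⟨z, rfl⟩; exact (abs_le.1 (hub z)).2⟩
  set M := sSup (Set.range u) with hM
  have hleM : ∀ y, u y ≤ M := fun y => le_csSup hMub ⟨y, rfl⟩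
  set A : En n → ℝ := fun y => ⨍ z in ball y ε, u z with hA
  have hAcont : Continuous A := contA hε u hum hub
  have hAle : ∀ y, A y ≤ M := fun y => avg_le u hum hub hleM y hε
  have hkey : ∀ y ∈ Ω, u y ≤ α * M + β * A y := by
    intro y hy
    have hS : sSup (u '' ball y ε) ≤ M :=
      csSup_le (⟨u y, y, mem_ball_self hε, rfl⟩) (by rintro _ ⟨z, _, rfl⟩; exact hleM z)
    have hI : sInf (u '' ball y ε) ≤ M := by
      have h1 : sInf (u '' ball y ε) ≤ u y :=
        csInf_le ⟨-Mu, by rintro _ ⟨z, _, rfl⟩; exact (abs_le.1 (hub z)).1⟩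
          ⟨y, mem_ball_self hε, rfl⟩
      exact h1.trans (hleM y)
    rw [hdpp y hy]
    have : α / 2 * (sSup (u '' ball y ε) + sInf (u '' ball y ε)) ≤ α / 2 * (M + M) :=
      mul_le_mul_of_nonneg_left (add_le_add hS hI) (by linarith)
    calc α / 2 * (sSup (u '' ball y ε) + sInf (u '' ball y ε)) + β * A y
        ≤ α / 2 * (M + M) + β * A y := by linarith
      _ = α * M + β * A y := by ring
  have hCLM : ∀ w ∈ Ω, u w = M → A w = M := by
    intro w hw hwM
    have h1 := hkey w hw
    rw [hwM] at h1
    rw [hβ] at h1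
    have h3 : M ≤ A w := by nlinarith [hAle w]
    exact le_antisymm (hAle w) h3
  intro x
  by_contra hcon
  push_neg at hcon
  have hGM : Gn < M := lt_of_lt_of_le hcon (hleM x)
  -- a sequence approaching the supremum, inside Ω
  have hseq : ∀ j : ℕ, ∃ z, max (M - ((j : ℝ) + 1)⁻¹) Gn < u z := by
    intro j
    have hj : (0:ℝ) < ((j : ℝ) + 1)⁻¹ := by positivity
    have hlt : max (M - ((j : ℝ) + 1)⁻¹) Gn < M := max_lt (by linarith) hGM
    obtain ⟨_, ⟨z, rfl⟩, hz⟩ := exists_lt_of_lt_csSup ⟨u x, Set.mem_range_self x⟩ hlt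
    exact ⟨z, hz⟩
  choose xs hxs using hseq
  have hxsΩ : ∀ j, xs j ∈ Ω := by
    intro j
    by_contra hj
    have := (hxs j).trans_le ((hbdry _ hj).le.trans (le_abs_self _))
    exact ((le_max_right _ _).trans_lt ((this.trans_le (hGnle _ hj)))).false
  have hxsM : Tendsto (fun j => u (xs j)) atTop (𝓝 M) := by
    apply tendsto_of_tendsto_of_tendsto_of_le_of_le (g := fun j : ℕ => M - ((j : ℝ) + 1)⁻¹)
      (h := fun _ => M)
    · have : Tendsto (fun j : ℕ => ((j : ℝ) + 1)⁻¹) atTop (𝓝 0) := by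
        simpa [one_div] using tendsto_one_div_add_atTop_nhds_zero_nat (𝕜 := ℝ)
      simpa using (tendsto_const_nhds (x := M)).sub this
    · exact tendsto_const_nhds
    · exact fun j => (le_max_left _ _).trans (hxs j).le
    · exact fun j => hleM _
  obtain ⟨x₀, hx₀cl, φ, hφmono, hφtend⟩ :=
    hΩb.isCompact_closure.tendsto_subseq (fun j => subset_closure (hxsΩ j))
  have hAx₀ : A x₀ = M := by
    refine le_antisymm (hAle x₀) ?_
    have h1 : Tendsto (fun j => A (xs (φ j))) atTop (𝓝 (A x₀)) :=
      (hAcont.tendsto x₀).comp hφtend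
    have h2 : Tendsto (fun j => (u (xs (φ j)) - α * M) / β) atTop (𝓝 ((M - α * M) / β)) := by
      apply Tendsto.div_const
      exact ((hxsM.comp (hφmono.tendsto_atTop)).sub_const _)
    have h3 : ∀ j, (u (xs (φ j)) - α * M) / β ≤ A (xs (φ j)) := by
      intro j
      rw [div_le_iff₀ hβpos]
      have := hkey _ (hxsΩ (φ j))
      linarith [this]
    have h4 : (M - α * M) / β ≤ A x₀ := le_of_tendsto_of_tendsto' h2 h1 h3
    have h5 : (M - α * M) / β = M := by
      rw [hβ]
      rw [div_eq_iff (by linarith : (1:ℝ) - α ≠ 0)]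
      ring
    linarith [h4, h5.symm.le]
  have hae₀ : ∀ᵐ w ∂(volume.restrict (ball x₀ ε)), u w = M :=
    ae_eq_const u hum hub hleM x₀ hε hAx₀
  -- starting point in Ω with A = M
  have hball₀ : (ball x₀ ε ∩ Ω).Nonempty := by
    rcases Metric.mem_closure_iff.1 hx₀cl ε hε with ⟨y, hyΩ, hy⟩
    exact ⟨y, mem_ball'.2 hy, hyΩ⟩
  obtain ⟨w₀, hw₀V, hw₀M⟩ := exM u hum (isOpen_ball.inter hΩo) hball₀
    inter_subset_left hae₀
  have hw₀S : A w₀ = M := hCLM w₀ hw₀V.2 hw₀M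
  -- the set where A = M
  set S : Set (En n) := {w | A w = M} with hSdef
  have hSclosed : IsClosed S := isClosed_eq hAcont continuous_const
  have hprop : ∀ y, A y = M → ∀ z, z ∈ ball y ε ∩ Ω → A z = M := by
    intro y hAy z hz
    have haey : ∀ᵐ w ∂(volume.restrict (ball y ε)), u w = M :=
      ae_eq_const u hum hub hleM y hε hAy
    have : z ∈ closure S := by
      rw [_root_.mem_closure_iff]
      intro o ho hzo
      have hVo : IsOpen (o ∩ (ball y ε ∩ Ω)) := ho.inter (isOpen_ball.inter hΩo)
      have hVone : (o ∩ (ball y ε ∩ Ω)).Nonempty := ⟨z, hzo, hz⟩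
      obtain ⟨w, hwV, hwM⟩ := exM u hum hVo hVone
        (fun w hw => hw.2.1) haey
      exact ⟨w, hwV.1, hCLM w hwV.2.2 hwM⟩
    rwa [hSclosed.closure_eq] at this
  have hUopen : IsOpen (Ω ∩ S) := by
    rw [isOpen_iff_mem_nhds]
    intro w hw
    refine Filter.mem_of_superset ((isOpen_ball.inter hΩo).mem_nhds ⟨mem_ball_self hε, hw.1⟩) ?_
    exact fun z hz => ⟨hz.2, hprop w hw.2 z hz⟩
  have hΩS : Ω ⊆ S := by
    by_contra hns
    obtain ⟨p, hpΩ, hpS⟩ : ∃ p, p ∈ Ω ∧ p ∉ S := by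
      rcases not_subset.1 hns with ⟨p, h1, h2⟩; exact ⟨p, h1, h2⟩
    have := hΩconn.isPreconnected (Ω ∩ S) Sᶜ hUopen hSclosed.isOpen_compl
      (fun q hq => by by_cases hqS : q ∈ S
                      · exact Or.inl ⟨hq, hqS⟩
                      · exact Or.inr hqS)
      ⟨w₀, hw₀V.2, hw₀V.2, hw₀S⟩ ⟨p, hpΩ, hpS⟩
    obtain ⟨q, _, hq2, hq3⟩ := this
    exact hq3 hq2.2
  -- find a point outside Ω but within distance ε of a point of Ω
  obtain ⟨y₀, hy₀⟩ := hΩconn.nonempty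
  obtain ⟨R, hR0, hRsub⟩ := hΩb.subset_closedBall_lt 0 y₀
  have hi : Fin n := ⟨0, hn⟩
  set v : En n := EuclideanSpace.single hi (1 : ℝ) with hv
  have hvnorm : ‖v‖ = 1 := by rw [hv, EuclideanSpace.norm_single]; norm_num
  set f : ℝ → ℝ := fun t => infDist (y₀ + t • v) Ω with hf
  have hfc : ContinuousOn f (Set.Icc 0 (R + ε)) := by
    apply Continuous.continuousOn
    exact (continuous_infDist_pt Ω).comp (continuous_const.add (continuous_id.smul continuous_const))
  have hdista : ∀ t : ℝ, dist (y₀ + t • v) y₀ = |t| := by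
    intro t
    rw [dist_eq_norm, add_sub_cancel_left, norm_smul, hvnorm, mul_one, Real.norm_eq_abs]
  have hf0 : f 0 = 0 := by
    show infDist (y₀ + (0:ℝ) • v) Ω = 0
    rw [zero_smul, add_zero]
    exact infDist_zero_of_mem hy₀
  have hfR : ε / 2 ≤ f (R + ε) := by
    by_contra hcon2
    push_neg at hcon2
    rcases (infDist_lt_iff ⟨y₀, hy₀⟩).1 hcon2 with ⟨q, hqΩ, hq⟩
    have h1 : dist (y₀ + (R + ε) • v) y₀ ≤ dist (y₀ + (R + ε) • v) q + dist q y₀ :=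
      dist_triangle _ _ _
    have h2 : dist q y₀ ≤ R := by
      have := hRsub hqΩ
      simpa [Metric.mem_closedBall] using this
    rw [hdista, abs_of_nonneg (by linarith)] at h1
    linarith
  have hIVT := intermediate_value_Icc (by linarith : (0:ℝ) ≤ R + ε) hfc
  have hmem : ε / 2 ∈ Set.Icc (f 0) (f (R + ε)) := by
    constructor
    · rw [hf0]; linarith
    · exact hfR
  obtain ⟨t, _, htf⟩ := hIVT hmem
  set z : En n := y₀ + t • v with hz
  have hzdist : infDist z Ω = ε / 2 := htf
  obtain ⟨y₁, hy₁Ω, hy₁⟩ := (infDist_lt_iff ⟨y₀, hy₀⟩).1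
    (by rw [hzdist]; linarith : infDist z Ω < ε / 2 + ε / 8)
  have hBsub : ball z (ε / 4) ⊆ ball y₁ ε := by
    intro w hw
    rw [mem_ball] at hw ⊢
    calc dist w y₁ ≤ dist w z + dist z y₁ := dist_triangle _ _ _
      _ < ε / 4 + (ε / 2 + ε / 8) := add_lt_add hw hy₁
      _ < ε := by linarith
  have hBout : ∀ w ∈ ball z (ε / 4), w ∉ Ω := by
    intro w hw hwΩ
    have h1 : infDist z Ω ≤ dist z w := infDist_le_dist_of_mem hwΩ
    rw [hzdist, dist_comm] at h1
    rw [mem_ball] at hw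
    linarith
  have hAy₁ : A y₁ = M := hΩS hy₁Ω
  have haey₁ : ∀ᵐ w ∂(volume.restrict (ball y₁ ε)), u w = M :=
    ae_eq_const u hum hub hleM y₁ hε hAy₁
  obtain ⟨w₁, hw₁B, hw₁M⟩ := exM u hum isOpen_ball ⟨z, mem_ball_self (by linarith)⟩
    hBsub haey₁
  have hw₁Ω : w₁ ∉ Ω := hBout w₁ hw₁B
  have : M ≤ Gn := by
    calc M = u w₁ := hw₁M.symm
      _ = g w₁ := hbdry w₁ hw₁Ω
      _ ≤ |g w₁| := le_abs_self _
      _ ≤ Gn := hGnle w₁ hw₁Ω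
  linarith



lemma nontriv (hn : 1 ≤ n) : Nontrivial (En n) := by
  refine ⟨⟨0, EuclideanSpace.single (⟨0, hn⟩ : Fin n) (1 : ℝ), fun h => ?_⟩⟩
  have := congrArg norm h
  rw [norm_zero, EuclideanSpace.norm_single] at this
  norm_num at this

lemma evUB {u : En n → ℝ} {Mu : ℝ} (hub : ∀ x, |u x| ≤ Mu) {ξ : En n} {a : ℕ → En n}
    (ha : Tendsto a atTop (𝓝 ξ)) {t : ℝ} (ht : max (Filter.limsup u (𝓝[≠] ξ)) (u ξ) < t) :
    ∀ᶠ j in atTop, u (a j) < t := by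
  have hbd : IsBoundedUnder (· ≤ ·) (𝓝[≠] ξ) u :=
    isBoundedUnder_of ⟨Mu, fun y => (abs_le.1 (hub y)).2⟩
  have h1 : ∀ᶠ y in 𝓝[≠] ξ, u y < t :=
    eventually_lt_of_limsup_lt (max_lt_iff.1 ht).1 hbd
  obtain ⟨O, hOopen, hξO, hO⟩ := mem_nhdsWithin.1 h1
  have hev : ∀ᶠ j in atTop, a j ∈ O := ha (hOopen.mem_nhds hξO)
  filter_upwards [hev] with j hj
  by_cases hje : a j = ξ
  · rw [hje]; exact (max_lt_iff.1 ht).2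
  · exact hO ⟨hj, hje⟩

lemma evLB {u : En n → ℝ} {Mu : ℝ} (hub : ∀ x, |u x| ≤ Mu) {ξ : En n} {a : ℕ → En n}
    (ha : Tendsto a atTop (𝓝 ξ)) {s : ℝ} (hs : s < min (Filter.liminf u (𝓝[≠] ξ)) (u ξ)) :
    ∀ᶠ j in atTop, s < u (a j) := by
  have hbd : IsBoundedUnder (· ≥ ·) (𝓝[≠] ξ) u :=
    isBoundedUnder_of ⟨-Mu, fun y => (abs_le.1 (hub y)).1⟩
  have h1 : ∀ᶠ y in 𝓝[≠] ξ, s < u y :=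
    eventually_lt_of_lt_liminf (lt_min_iff.1 hs).1 hbd
  obtain ⟨O, hOopen, hξO, hO⟩ := mem_nhdsWithin.1 h1
  have hev : ∀ᶠ j in atTop, a j ∈ O := ha (hOopen.mem_nhds hξO)
  filter_upwards [hev] with j hj
  by_cases hje : a j = ξ
  · rw [hje]; exact (lt_min_iff.1 hs).2
  · exact hO ⟨hj, hje⟩

lemma invSucc_tendsto : Tendsto (fun j : ℕ => ((j : ℝ) + 1)⁻¹) atTop (𝓝 0) := by
  simpa [one_div] using tendsto_one_div_add_atTop_nhds_zero_nat (𝕜 := ℝ)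

lemma seqMax (hn : 1 ≤ n) {u : En n → ℝ} {Mu : ℝ} (hub : ∀ x, |u x| ≤ Mu)
    {Ω : Set (En n)} (hΩo : IsOpen Ω) {x : En n} (hx : x ∈ Ω) :
    ∃ p : ℕ → En n, (∀ j, p j ∈ Ω) ∧ Tendsto p atTop (𝓝 x) ∧
      Tendsto (fun j => u (p j)) atTop (𝓝 (max (Filter.limsup u (𝓝[≠] x)) (u x))) := by
  haveI := nontriv hn
  haveI : (𝓝[≠] (x : En n)).NeBot := Module.punctured_nhds_neBot ℝ (En n) x
  rcases le_or_gt (Filter.limsup u (𝓝[≠] x)) (u x) with hc | hc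
  · exact ⟨fun _ => x, fun _ => hx, tendsto_const_nhds, by
      rw [max_eq_right hc]; exact tendsto_const_nhds⟩
  · set ℓ := Filter.limsup u (𝓝[≠] x) with hℓ
    rw [max_eq_left hc.le]
    have hbd : IsBoundedUnder (· ≤ ·) (𝓝[≠] x) u :=
      isBoundedUnder_of ⟨Mu, fun y => (abs_le.1 (hub y)).2⟩
    have hbdge : IsBoundedUnder (· ≥ ·) (𝓝[≠] x) u :=
      isBoundedUnder_of ⟨-Mu, fun y => (abs_le.1 (hub y)).1⟩
    have hcb : IsCoboundedUnder (· ≤ ·) (𝓝[≠] x) u := hbdge.isCoboundedUnder_le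
    have hget : ∀ j : ℕ, ∃ y, ((ℓ - ((j:ℝ)+1)⁻¹ < u y ∧ u y < ℓ + ((j:ℝ)+1)⁻¹) ∧
        y ∈ Ω ∧ y ∈ ball x ((j:ℝ)+1)⁻¹) := by
      intro j
      have hδ : (0:ℝ) < ((j:ℝ)+1)⁻¹ := by positivity
      have hfr : ∃ᶠ y in 𝓝[≠] x, ℓ - ((j:ℝ)+1)⁻¹ < u y :=
        frequently_lt_of_lt_limsup hcb (by linarith)
      have hev1 : ∀ᶠ y in 𝓝[≠] x, u y < ℓ + ((j:ℝ)+1)⁻¹ :=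
        eventually_lt_of_limsup_lt (by linarith) hbd
      have hev2 : ∀ᶠ y in 𝓝[≠] x, y ∈ Ω :=
        mem_nhdsWithin_of_mem_nhds (hΩo.mem_nhds hx)
      have hev3 : ∀ᶠ y in 𝓝[≠] x, y ∈ ball x ((j:ℝ)+1)⁻¹ :=
        mem_nhdsWithin_of_mem_nhds (isOpen_ball.mem_nhds (mem_ball_self hδ))
      exact ((hfr.and_eventually hev1).and_eventually (hev2.and hev3)).exists
    choose p hp using hget
    refine ⟨p, fun j => (hp j).2.1, ?_, ?_⟩
    · rw [tendsto_iff_dist_tendsto_zero]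
      apply squeeze_zero (fun j => dist_nonneg) (fun j => (mem_ball.1 (hp j).2.2).le)
        invSucc_tendsto
    · apply tendsto_of_tendsto_of_tendsto_of_le_of_le
        (g := fun j : ℕ => ℓ - ((j:ℝ)+1)⁻¹) (h := fun j : ℕ => ℓ + ((j:ℝ)+1)⁻¹)
      · simpa using (tendsto_const_nhds (x := ℓ)).sub invSucc_tendsto
      · simpa using (tendsto_const_nhds (x := ℓ)).add invSucc_tendsto
      · exact fun j => ((hp j).1.1).le
      · exact fun j => ((hp j).1.2).le

lemma seqMin (hn : 1 ≤ n) {u : En n → ℝ} {Mu : ℝ} (hub : ∀ x, |u x| ≤ Mu)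
    {Ω : Set (En n)} (hΩo : IsOpen Ω) {x : En n} (hx : x ∈ Ω) :
    ∃ p : ℕ → En n, (∀ j, p j ∈ Ω) ∧ Tendsto p atTop (𝓝 x) ∧
      Tendsto (fun j => u (p j)) atTop (𝓝 (min (Filter.liminf u (𝓝[≠] x)) (u x))) := by
  haveI := nontriv hn
  haveI : (𝓝[≠] (x : En n)).NeBot := Module.punctured_nhds_neBot ℝ (En n) x
  rcases le_or_gt (u x) (Filter.liminf u (𝓝[≠] x)) with hc | hc
  · exact ⟨fun _ => x, fun _ => hx, tendsto_const_nhds, by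
      rw [min_eq_right hc]; exact tendsto_const_nhds⟩
  · set ℓ := Filter.liminf u (𝓝[≠] x) with hℓ
    rw [min_eq_left hc.le]
    have hbd : IsBoundedUnder (· ≥ ·) (𝓝[≠] x) u :=
      isBoundedUnder_of ⟨-Mu, fun y => (abs_le.1 (hub y)).1⟩
    have hbdle : IsBoundedUnder (· ≤ ·) (𝓝[≠] x) u :=
      isBoundedUnder_of ⟨Mu, fun y => (abs_le.1 (hub y)).2⟩
    have hcb : IsCoboundedUnder (· ≥ ·) (𝓝[≠] x) u := hbdle.isCoboundedUnder_ge
    have hget : ∀ j : ℕ, ∃ y, ((u y < ℓ + ((j:ℝ)+1)⁻¹ ∧ ℓ - ((j:ℝ)+1)⁻¹ < u y) ∧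
        y ∈ Ω ∧ y ∈ ball x ((j:ℝ)+1)⁻¹) := by
      intro j
      have hδ : (0:ℝ) < ((j:ℝ)+1)⁻¹ := by positivity
      have hfr : ∃ᶠ y in 𝓝[≠] x, u y < ℓ + ((j:ℝ)+1)⁻¹ :=
        frequently_lt_of_liminf_lt hcb (by linarith)
      have hev1 : ∀ᶠ y in 𝓝[≠] x, ℓ - ((j:ℝ)+1)⁻¹ < u y :=
        eventually_lt_of_lt_liminf (by linarith) hbd
      have hev2 : ∀ᶠ y in 𝓝[≠] x, y ∈ Ω :=
        mem_nhdsWithin_of_mem_nhds (hΩo.mem_nhds hx)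
      have hev3 : ∀ᶠ y in 𝓝[≠] x, y ∈ ball x ((j:ℝ)+1)⁻¹ :=
        mem_nhdsWithin_of_mem_nhds (isOpen_ball.mem_nhds (mem_ball_self hδ))
      exact ((hfr.and_eventually hev1).and_eventually (hev2.and hev3)).exists
    choose p hp using hget
    refine ⟨p, fun j => (hp j).2.1, ?_, ?_⟩
    · rw [tendsto_iff_dist_tendsto_zero]
      apply squeeze_zero (fun j => dist_nonneg) (fun j => (mem_ball.1 (hp j).2.2).le)
        invSucc_tendsto
    · apply tendsto_of_tendsto_of_tendsto_of_le_of_le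
        (g := fun j : ℕ => ℓ - ((j:ℝ)+1)⁻¹) (h := fun j : ℕ => ℓ + ((j:ℝ)+1)⁻¹)
      · simpa using (tendsto_const_nhds (x := ℓ)).sub invSucc_tendsto
      · simpa using (tendsto_const_nhds (x := ℓ)).add invSucc_tendsto
      · exact fun j => ((hp j).1.2).le
      · exact fun j => ((hp j).1.1).le

lemma recStep (hn : 1 ≤ n) {Ω : Set (En n)} (hΩo : IsOpen Ω)
    {α β ε : ℝ} (hα : 0 ≤ α) (hβ : β = 1 - α) (hε : 0 < ε)
    {u : En n → ℝ} (hum : Measurable u) {Mu : ℝ} (hub : ∀ x, |u x| ≤ Mu)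
    (hdpp : ∀ x ∈ Ω, u x =
      α / 2 * (sSup (u '' ball x ε) + sInf (u '' ball x ε)) + β * ⨍ y in ball x ε, u y)
    {x : En n} (hx : x ∈ Ω) :
    ∃ ξ ∈ closedBall x ε,
      max (Filter.limsup u (𝓝[≠] x)) (u x) - min (Filter.liminf u (𝓝[≠] x)) (u x) ≤
      α * (max (Filter.limsup u (𝓝[≠] ξ)) (u ξ) - min (Filter.liminf u (𝓝[≠] ξ)) (u ξ)) := by
  set A : En n → ℝ := fun y => ⨍ z in ball y ε, u z with hA
  have hAcont : Continuous A := contA hε u hum hub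
  have hball0 : (ball (0 : En n) ε).Nonempty := ⟨0, mem_ball_self hε⟩
  have himg : ∀ y : En n, u '' ball y ε = (fun w => u (y + w)) '' ball (0 : En n) ε := by
    intro y
    ext c
    constructor
    · rintro ⟨z, hz, rfl⟩
      refine ⟨z - y, ?_, by simp⟩
      rw [mem_ball_zero_iff]
      rw [mem_ball] at hz
      rwa [← dist_eq_norm]
    · rintro ⟨w, hw, rfl⟩
      refine ⟨y + w, ?_, rfl⟩
      rw [mem_ball_zero_iff] at hw
      rw [mem_ball, dist_eq_norm]
      simpa using hw
  set D : En n → En n → ℝ :=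
    fun y z => sSup ((fun w => u (y + w) - u (z + w)) '' ball (0 : En n) ε) with hD
  have hDbdd : ∀ y z : En n, BddAbove ((fun w => u (y + w) - u (z + w)) '' ball (0 : En n) ε) := by
    intro y z
    refine ⟨2 * Mu, ?_⟩
    rintro _ ⟨w, _, rfl⟩
    show u (y + w) - u (z + w) ≤ 2 * Mu
    have h1 := abs_le.1 (hub (y + w))
    have h2 := abs_le.1 (hub (z + w))
    linarith [h1.1, h1.2, h2.1, h2.2]
  have hkey : ∀ y ∈ Ω, ∀ z ∈ Ω, u y - u z ≤ α * D y z + β * (A y - A z) := by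
    intro y hy z hz
    have hSy : sSup (u '' ball y ε) ≤ sSup (u '' ball z ε) + D y z := by
      rw [himg y, himg z]
      apply csSup_le (hball0.image _)
      rintro _ ⟨w, hw, rfl⟩
      have h1 : u (z + w) ≤ sSup ((fun w => u (z + w)) '' ball (0 : En n) ε) :=
        le_csSup ⟨Mu, by rintro _ ⟨v, _, rfl⟩; exact (abs_le.1 (hub _)).2⟩ ⟨w, hw, rfl⟩
      have h2 : u (y + w) - u (z + w) ≤ D y z := le_csSup (hDbdd y z) ⟨w, hw, rfl⟩
      linarith
    have hIy : sInf (u '' ball y ε) ≤ sInf (u '' ball z ε) + D y z := by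
      rw [himg y, himg z]
      rw [← sub_le_iff_le_add]
      apply le_csInf (hball0.image _)
      rintro _ ⟨w, hw, rfl⟩
      have h1 : sInf ((fun w => u (y + w)) '' ball (0 : En n) ε) ≤ u (y + w) :=
        csInf_le ⟨-Mu, by rintro _ ⟨v, _, rfl⟩; exact (abs_le.1 (hub _)).1⟩ ⟨w, hw, rfl⟩
      have h2 : u (y + w) - u (z + w) ≤ D y z := le_csSup (hDbdd y z) ⟨w, hw, rfl⟩
      linarith
    have ey := hdpp y hy
    have ez := hdpp z hz
    have : u y - u z = α / 2 * (sSup (u '' ball y ε) - sSup (u '' ball z ε))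
        + α / 2 * (sInf (u '' ball y ε) - sInf (u '' ball z ε)) + β * (A y - A z) := by
      rw [ey, ez]; ring
    rw [this]
    have hα2 : (0:ℝ) ≤ α / 2 := by linarith
    nlinarith [mul_le_mul_of_nonneg_left (show sSup (u '' ball y ε) - sSup (u '' ball z ε) ≤ D y z by linarith) hα2,
      mul_le_mul_of_nonneg_left (show sInf (u '' ball y ε) - sInf (u '' ball z ε) ≤ D y z by linarith) hα2]
  obtain ⟨p, hpΩ, hpx, hpU⟩ := seqMax hn hub hΩo hx
  obtain ⟨q, hqΩ, hqx, hqL⟩ := seqMin hn hub hΩo hx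
  -- choose near-optimal directions
  have hwch : ∀ j : ℕ, ∃ w ∈ ball (0 : En n) ε,
      D (p j) (q j) - ((j:ℝ)+1)⁻¹ < u (p j + w) - u (q j + w) := by
    intro j
    have hδ : (0:ℝ) < ((j:ℝ)+1)⁻¹ := by positivity
    obtain ⟨_, ⟨w, hw, rfl⟩, hlt⟩ := exists_lt_of_lt_csSup (hball0.image _)
      (show D (p j) (q j) - ((j:ℝ)+1)⁻¹ < D (p j) (q j) by linarith)
    exact ⟨w, hw, hlt⟩
  choose w hwball hwlt using hwch
  obtain ⟨winf, hwinf, φ, hφmono, hwtend⟩ :=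
    (isCompact_closedBall (0 : En n) ε).tendsto_subseq
      (fun j => ball_subset_closedBall (hwball j))
  refine ⟨x + winf, by rwa [mem_closedBall, dist_self_add_left, ← mem_closedBall_zero_iff], ?_⟩
  set ξ := x + winf with hξ
  set U := max (Filter.limsup u (𝓝[≠] x)) (u x) with hU
  set L := min (Filter.liminf u (𝓝[≠] x)) (u x) with hL
  set Uξ := max (Filter.limsup u (𝓝[≠] ξ)) (u ξ) with hUξ
  set Lξ := min (Filter.liminf u (𝓝[≠] ξ)) (u ξ) with hLξ
  have hφtop : Tendsto φ atTop atTop := hφmono.tendsto_atTop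
  have hatend : Tendsto (fun j => p (φ j) + w (φ j)) atTop (𝓝 ξ) :=
    ((hpx.comp hφtop).add hwtend)
  have hbtend : Tendsto (fun j => q (φ j) + w (φ j)) atTop (𝓝 ξ) :=
    ((hqx.comp hφtop).add hwtend)
  set c : ℕ → ℝ := fun j => u (p (φ j)) - u (q (φ j))
    - β * (A (p (φ j)) - A (q (φ j))) - α * (((φ j : ℝ)+1)⁻¹) with hc
  have hctend : Tendsto c atTop (𝓝 (U - L)) := by
    have h1 : Tendsto (fun j => u (p (φ j))) atTop (𝓝 U) := hpU.comp hφtop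
    have h2 : Tendsto (fun j => u (q (φ j))) atTop (𝓝 L) := hqL.comp hφtop
    have h3 : Tendsto (fun j => A (p (φ j))) atTop (𝓝 (A x)) :=
      (hAcont.tendsto x).comp (hpx.comp hφtop)
    have h4 : Tendsto (fun j => A (q (φ j))) atTop (𝓝 (A x)) :=
      (hAcont.tendsto x).comp (hqx.comp hφtop)
    have h5 : Tendsto (fun j => (((φ j : ℝ))+1)⁻¹) atTop (𝓝 0) :=
      invSucc_tendsto.comp hφtop
    have := ((h1.sub h2).sub ((tendsto_const_nhds (x := β)).mul (h3.sub h4))).sub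
      ((tendsto_const_nhds (x := α)).mul h5)
    simpa using this
  have hckey : ∀ j, c j ≤ α * (u (p (φ j) + w (φ j)) - u (q (φ j) + w (φ j))) := by
    intro j
    have h1 := hkey _ (hpΩ (φ j)) _ (hqΩ (φ j))
    have h2 := (hwlt (φ j)).le
    have h3 : α * D (p (φ j)) (q (φ j)) ≤
        α * (u (p (φ j) + w (φ j)) - u (q (φ j) + w (φ j)) + ((φ j : ℝ)+1)⁻¹) :=
      mul_le_mul_of_nonneg_left (by linarith) hα
    simp only [hc]
    nlinarith [h1, h3]
  have hmain : ∀ t s : ℝ, Uξ < t → s < Lξ → U - L ≤ α * t - α * s := by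
    intro t s ht hs
    have hevt : ∀ᶠ j in atTop, u (p (φ j) + w (φ j)) < t := evUB hub hatend ht
    have hevs : ∀ᶠ j in atTop, s < u (q (φ j) + w (φ j)) := evLB hub hbtend hs
    apply le_of_tendsto hctend
    filter_upwards [hevt, hevs] with j h1 h2
    calc c j ≤ α * (u (p (φ j) + w (φ j)) - u (q (φ j) + w (φ j))) := hckey j
      _ ≤ α * (t - s) := mul_le_mul_of_nonneg_left (by linarith) hα
      _ = α * t - α * s := by ring
  -- pass to the limit in t and s
  apply le_of_forall_pos_le_add
  intro η hη
  have hδ : 0 < η / (2 * α + 2) := by positivity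
  have := hmain (Uξ + η / (2 * α + 2)) (Lξ - η / (2 * α + 2)) (by linarith) (by linarith)
  have hfrac : α * (η / (2 * α + 2)) ≤ η / 2 := by
    rw [show α * (η / (2 * α + 2)) = α * η / (2 * α + 2) by ring,
      div_le_iff₀ (by positivity : (0:ℝ) < 2 * α + 2)]
    nlinarith
  nlinarith

lemma cball_sub {Ω : Set (En n)} (hΩo : IsOpen Ω) {x : En n} (hx : x ∈ Ω) {r : ℝ}
    (hr0 : 0 ≤ r) (hr : r < infDist x (frontier Ω)) : closedBall x r ⊆ Ω := by
  intro z hz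
  by_contra hzΩ
  have hseg : (segment ℝ x z ∩ frontier Ω).Nonempty := by
    by_cases hzc : z ∈ closure Ω
    · exact ⟨z, right_mem_segment _ _ _, hzc, by rwa [hΩo.interior_eq]⟩
    · by_contra hempty
      rw [Set.not_nonempty_iff_eq_empty] at hempty
      have hpc := (convex_segment x z).isPreconnected
      have hcover : segment ℝ x z ⊆ interior Ω ∪ (closure Ω)ᶜ := by
        intro c hc
        by_cases hci : c ∈ interior Ω
        · exact Or.inl hci
        · refine Or.inr fun hcc => ?_
          have : c ∈ segment ℝ x z ∩ frontier Ω := ⟨hc, hcc, hci⟩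
          rw [hempty] at this
          exact this
      have := hpc (interior Ω) (closure Ω)ᶜ isOpen_interior isClosed_closure.isOpen_compl
        hcover ⟨x, left_mem_segment _ _ _, by rwa [hΩo.interior_eq]⟩
        ⟨z, right_mem_segment _ _ _, hzc⟩
      obtain ⟨c, _, hci, hcc⟩ := this
      exact hcc (subset_closure (interior_subset hci))
  obtain ⟨c, hcseg, hcf⟩ := hseg
  have hdc : dist x c ≤ dist x z := by
    obtain ⟨a, b, ha, hb, hab, rfl⟩ := hcseg
    have heq : x - (a • x + b • z) = b • (x - z) := by
      rw [smul_sub]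
      rw [show a = 1 - b by linarith]
      module
    rw [dist_eq_norm, dist_eq_norm, heq, norm_smul, Real.norm_eq_abs, abs_of_nonneg hb]
    nlinarith [norm_nonneg (x - z)]
  have h1 : infDist x (frontier Ω) ≤ dist x c := infDist_le_dist_of_mem hcf
  have h2 : dist z x ≤ r := mem_closedBall.1 hz
  rw [dist_comm] at h2
  linarith


end AuxStmt11

/-- size of the jumps for the tug-of-war with noise DPP. -/
theorem stmt11 (n : ℕ) (hn : 1 ≤ n) (Ω : Set (En n)) (hΩo : IsOpen Ω) (hΩconn : IsConnected Ω)
    (hΩb : Bornology.IsBounded Ω)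
    (α β ε : ℝ) (hα : 0 ≤ α) (hα1 : α < 1) (hβ : β = 1 - α) (hε : 0 < ε)
    (g : En n → ℝ) (hgm : Measurable g) (hgb : ∃ M : ℝ, ∀ x, |g x| ≤ M)
    (u : En n → ℝ) (hu : BddBorel u)
    (hbdry : ∀ x ∉ Ω, u x = g x)
    (hdpp : ∀ x ∈ Ω, u x =
      α / 2 * (sSup (u '' ball x ε) + sInf (u '' ball x ε)) + β * ⨍ y in ball x ε, u y) :
    ∀ x ∈ Ω,
      Filter.limsup u (𝓝[≠] x) - Filter.liminf u (𝓝[≠] x) ≤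
        2 * supNormOn g Ωᶜ * α ^ ⌈Metric.infDist x (frontier Ω) / ε⌉₊ := by
  obtain ⟨hum, Mu, hub⟩ := hu
  haveI := nontriv hn
  set Gn := supNormOn g Ωᶜ with hGndef
  have hGneq : Gn = sSup ((fun x => |g x|) '' Ωᶜ) := rfl
  -- global bound |u| ≤ Gn
  have hup : ∀ y, u y ≤ Gn := by
    rw [hGneq]
    exact maxPrinciple hn Ω hΩo hΩconn hΩb α β ε hα hα1 hβ hε g hgb u hum hub hbdry hdpp
  have hdown : ∀ y, -Gn ≤ u y := by
    have himgneg : ∀ s : Set (En n), (fun y => -u y) '' s = -(u '' s) := by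
      intro s
      rw [show (fun y => -u y) = (Neg.neg ∘ u) from rfl, Set.image_comp, Set.image_neg_eq_neg]
    have hdppneg : ∀ x ∈ Ω, (fun y => -u y) x =
        α / 2 * (sSup ((fun y => -u y) '' ball x ε) + sInf ((fun y => -u y) '' ball x ε)) +
          β * ⨍ y in ball x ε, -u y := by
      intro x hx
      have h := hdpp x hx
      simp only [himgneg]
      have e1 : sSup (-(u '' ball x ε)) = -sInf (u '' ball x ε) := by
        rw [Real.sInf_def, neg_neg]
      have e2 : sInf (-(u '' ball x ε)) = -sSup (u '' ball x ε) := by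
        rw [Real.sInf_def, neg_neg]
      have e3 : (⨍ y in ball x ε, -u y) = -⨍ y in ball x ε, u y := average_neg (μ := volume.restrict (ball x ε)) u
      rw [e1, e2, e3]
      show -u x = _
      rw [h]
      ring
    have hb' : ∀ x ∉ Ω, (fun y => -u y) x = (fun y => -g y) x := by
      intro x hx; show -u x = -g x; rw [hbdry x hx]
    have := maxPrinciple hn Ω hΩo hΩconn hΩb α β ε hα hα1 hβ hε (fun y => -g y)
      (by obtain ⟨Mg, hMg⟩ := hgb; exact ⟨Mg, fun x => by simpa [abs_neg] using hMg x⟩)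
      (fun y => -u y) hum.neg (Mu := Mu) (fun x => by simpa [abs_neg] using hub x)
      hb' hdppneg
    intro y
    have h2 := this y
    have himg : ((fun x => |(fun y => -g y) x|) '' Ωᶜ) = ((fun x => |g x|) '' Ωᶜ) := by
      congr 1
      funext x
      simp [abs_neg]
    rw [himg, ← hGneq] at h2
    have h3 : -u y ≤ Gn := h2
    linarith
  have habs : ∀ y, |u y| ≤ Gn := fun y => abs_le.2 ⟨hdown y, hup y⟩
  have hGn0 : 0 ≤ Gn := (abs_nonneg _).trans (habs 0)
  -- the jump functional
  set Psi : En n → ℝ := fun y =>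
    max (Filter.limsup u (𝓝[≠] y)) (u y) - min (Filter.liminf u (𝓝[≠] y)) (u y) with hPsi
  have hPsile : ∀ ξ : En n, Psi ξ ≤ 2 * Gn := by
    intro ξ
    haveI : (𝓝[≠] ξ).NeBot := Module.punctured_nhds_neBot ℝ (En n) ξ
    have hbdle : IsBoundedUnder (· ≤ ·) (𝓝[≠] ξ) u :=
      isBoundedUnder_of ⟨Gn, fun y => (abs_le.1 (habs y)).2⟩
    have hbdge : IsBoundedUnder (· ≥ ·) (𝓝[≠] ξ) u :=
      isBoundedUnder_of ⟨-Gn, fun y => (abs_le.1 (habs y)).1⟩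
    have h1 : Filter.limsup u (𝓝[≠] ξ) ≤ Gn :=
      limsup_le_of_le hbdge.isCoboundedUnder_le
        (Eventually.of_forall fun y => (abs_le.1 (habs y)).2)
    have h2 : -Gn ≤ Filter.liminf u (𝓝[≠] ξ) :=
      le_liminf_of_le hbdle.isCoboundedUnder_ge
        (Eventually.of_forall fun y => (abs_le.1 (habs y)).1)
    have h3 : max (Filter.limsup u (𝓝[≠] ξ)) (u ξ) ≤ Gn := max_le h1 (hup ξ)
    have h4 : -Gn ≤ min (Filter.liminf u (𝓝[≠] ξ)) (u ξ) := le_min h2 (hdown ξ)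
    simp only [hPsi]
    linarith
  -- iteration
  have hiter : ∀ (k : ℕ) (y : En n), y ∈ Ω → closedBall y ((k : ℝ) * ε) ⊆ Ω →
      Psi y ≤ 2 * Gn * α ^ (k + 1) := by
    intro k
    induction k with
    | zero =>
      intro y hy _
      obtain ⟨ξ, _, hle⟩ := recStep hn hΩo hα hβ hε hum hub hdpp hy
      calc Psi y ≤ α * Psi ξ := hle
        _ ≤ α * (2 * Gn) := mul_le_mul_of_nonneg_left (hPsile ξ) hα
        _ = 2 * Gn * α ^ (0 + 1) := by ring
    | succ k ih =>
      intro y hy hcb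
      obtain ⟨ξ, hξball, hle⟩ := recStep hn hΩo hα hβ hε hum hub hdpp hy
      have hcb2 : closedBall y (((k:ℝ) + 1) * ε) ⊆ Ω := by
        have : ((k:ℝ) + 1) * ε = ((k + 1 : ℕ) : ℝ) * ε := by push_cast; ring
        rw [this]
        exact hcb
      have hξΩ : ξ ∈ Ω := by
        apply hcb2
        apply closedBall_subset_closedBall (show ε ≤ ((k:ℝ)+1) * ε by nlinarith [hε.le])
        exact hξball
      have hcb' : closedBall ξ ((k : ℝ) * ε) ⊆ Ω := by
        refine subset_trans ?_ hcb2
        apply closedBall_subset_closedBall'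
        have := mem_closedBall.1 hξball
        nlinarith [this]
      calc Psi y ≤ α * Psi ξ := hle
        _ ≤ α * (2 * Gn * α ^ (k + 1)) := mul_le_mul_of_nonneg_left (ih ξ hξΩ hcb') hα
        _ = 2 * Gn * α ^ (k + 1 + 1) := by ring
  intro x hx
  haveI : (𝓝[≠] x).NeBot := Module.punctured_nhds_neBot ℝ (En n) x
  have hfinal : Filter.limsup u (𝓝[≠] x) - Filter.liminf u (𝓝[≠] x) ≤ Psi x := by
    simp only [hPsi]
    have := le_max_left (Filter.limsup u (𝓝[≠] x)) (u x)
    have := min_le_left (Filter.liminf u (𝓝[≠] x)) (u x)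
    linarith
  rcases Nat.eq_zero_or_pos ⌈Metric.infDist x (frontier Ω) / ε⌉₊ with hK0 | hKpos
  · rw [hK0, pow_zero, mul_one]
    exact hfinal.trans (hPsile x)
  · obtain ⟨k, hk⟩ : ∃ k, ⌈Metric.infDist x (frontier Ω) / ε⌉₊ = k + 1 :=
      ⟨⌈Metric.infDist x (frontier Ω) / ε⌉₊ - 1, by omega⟩
    have hklt : (k : ℝ) < Metric.infDist x (frontier Ω) / ε := by
      rw [← Nat.lt_ceil]
      omega
    have hkε : (k : ℝ) * ε < Metric.infDist x (frontier Ω) := by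
      rw [lt_div_iff₀ hε] at hklt
      exact hklt
    have hsub : closedBall x ((k : ℝ) * ε) ⊆ Ω :=
      cball_sub hΩo hx (by positivity) hkε
    rw [hk]
    exact hfinal.trans (hiter k x hx hsub)
end

section
/- Let L_ε be an admissible operator, let f : ℝⁿ → ℝ be a bounded Lipschitz function with Lipschitz constant Lip(f), and let u : ℝⁿ → ℝ be a bounded Borel function with L_ε u(x) = f(x) for all x ∈ ℝⁿ. Let e ∈ ℝⁿ be a unit vector, R > 0, γ ∈ (0,1], and h with 0 < |h| ≤ R, and define u_h^γ(x) = R^γ·(u(x + he) − u(x))/(|h|^γ + ε^γ). Then for every x ∈ ℝⁿ one has L⁺_ε(u_h^γ)(x) ≥ −R·Lip(f) and L⁻_ε(u_h^γ)(x) ≤ R·Lip(f). -/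
open MeasureTheory Metric Filter Topology

lemma deltaU_mul {n : ℕ} (c : ℝ) (w : En n → ℝ) (x y : En n) :
    deltaU (fun z => c * w z) x y = c * deltaU w x y := by
  simp only [deltaU]; ring

open Pointwise in
lemma sSup_image_mul {n : ℕ} (c : ℝ) (hc : 0 ≤ c) (g : En n → ℝ) (s : Set (En n)) :
    sSup ((fun ν => c * g ν) '' s) = c * sSup (g '' s) := by
  have : (fun ν => c * g ν) '' s = c • (g '' s) := by
    rw [← Set.image_smul, Set.image_image]; rfl
  rw [this, Real.sSup_smul_of_nonneg hc]; rfl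

open Pointwise in
lemma sInf_image_mul {n : ℕ} (c : ℝ) (hc : 0 ≤ c) (g : En n → ℝ) (s : Set (En n)) :
    sInf ((fun ν => c * g ν) '' s) = c * sInf (g '' s) := by
  have : (fun ν => c * g ν) '' s = c • (g '' s) := by
    rw [← Set.image_smul, Set.image_image]; rfl
  rw [this, Real.sInf_smul_of_nonneg hc]; rfl

lemma average_mul_left {n : ℕ} (c : ℝ) (g : En n → ℝ) (s : Set (En n)) :
    (⨍ y in s, c * g y) = c * ⨍ y in s, g y := by
  rw [MeasureTheory.average_eq', MeasureTheory.average_eq', MeasureTheory.integral_const_mul]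

lemma Lplus_mul {n : ℕ} (Λ α β ε : ℝ) (c : ℝ) (hc : 0 ≤ c) (w : En n → ℝ) (x : En n) :
    Lplus Λ α β ε (fun z => c * w z) x = c * Lplus Λ α β ε w x := by
  simp only [Lplus, deltaU_mul]
  rw [sSup_image_mul c hc, average_mul_left]
  ring

lemma Lminus_mul {n : ℕ} (Λ α β ε : ℝ) (c : ℝ) (hc : 0 ≤ c) (w : En n → ℝ) (x : En n) :
    Lminus Λ α β ε (fun z => c * w z) x = c * Lminus Λ α β ε w x := by
  simp only [Lminus, deltaU_mul]
  rw [sInf_image_mul c hc, average_mul_left]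
  ring

/-- extremal inequalities for the difference quotient when `L_ε u = f`. -/
theorem stmt16 (n : ℕ) (hn : 1 ≤ n) (Λ α β : ℝ) (hΛ : 0 < Λ) (hβ : 0 < β)
    (hα : 0 ≤ α) (hαβ : α + β = 1) (ε : ℝ) (hε : 0 < ε)
    (L : (En n → ℝ) → En n → ℝ) (hL : IsAdmissible Λ α β ε L)
    (f : En n → ℝ) (hf : BddBorel f)
    (Lf : ℝ) (hLf : 0 ≤ Lf) (hfLip : ∀ x y : En n, |f x - f y| ≤ Lf * ‖x - y‖)
    (u : En n → ℝ) (hu : BddBorel u) (hsol : ∀ x : En n, L u x = f x)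
    (e : En n) (he : ‖e‖ = 1) (R γ h : ℝ) (hR : 0 < R) (hγ : 0 < γ) (hγ1 : γ ≤ 1)
    (hh0 : 0 < |h|) (hhR : |h| ≤ R) :
    ∀ x : En n,
      -(R * Lf) ≤ Lplus Λ α β ε (diffQuot u e ε γ R h) x ∧
        Lminus Λ α β ε (diffQuot u e ε γ R h) x ≤ R * Lf := by
  intro x
  set D : ℝ := |h| ^ γ + ε ^ γ with hD
  have hhpos : (0:ℝ) < |h| ^ γ := Real.rpow_pos_of_pos hh0 γ
  have hεpos : (0:ℝ) < ε ^ γ := Real.rpow_pos_of_pos hε γ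
  have hDpos : 0 < D := by positivity
  set c : ℝ := R ^ γ / D with hc
  have hcpos : 0 < c := div_pos (Real.rpow_pos_of_pos hR γ) hDpos
  set w : En n → ℝ := fun z => u (z + h • e) - u z with hw
  have hveq : diffQuot u e ε γ R h = fun z => c * w z := by
    funext z
    simp only [diffQuot, hc, hw, hD]
    ring
  -- w is bounded Borel
  obtain ⟨humeas, M, hM⟩ := hu
  have hwB : BddBorel w := by
    refine ⟨(humeas.comp (measurable_add_const (h • e))).sub humeas, 2 * M, fun z => ?_⟩
    have h1 := hM (z + h • e); have h2 := hM z
    have := abs_sub (u (z + h • e)) (u z)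
    simp only [hw]
    calc |u (z + h • e) - u z| ≤ |u (z + h • e)| + |u z| := abs_sub _ _
      _ ≤ 2 * M := by linarith
  -- key: u + w is the translate of u
  have huw : u + w = fun z => u (z + h • e) := by
    funext z; simp [hw]
  obtain ⟨hH1, hH2, _⟩ := hL
  have hell := hH1 u w ⟨humeas, M, hM⟩ hwB x
  have htrans : L (u + w) x = f (x + h • e) := by
    rw [huw, hH2 u ⟨humeas, M, hM⟩ x (h • e), hsol]
  rw [htrans, hsol] at hell
  -- Lipschitz bound on the translate of f
  have hfd : |f (x + h • e) - f x| ≤ Lf * |h| := by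
    have := hfLip (x + h • e) x
    have hn : ‖(x + h • e) - x‖ = |h| := by
      simp [norm_smul, he, Real.norm_eq_abs]
    rw [hn] at this
    exact this
  -- c * |h| ≤ R
  have hchR : c * |h| ≤ R := by
    rw [hc, div_mul_eq_mul_div, div_le_iff₀ hDpos]
    have h1 : |h| = |h| ^ (1 - γ) * |h| ^ γ := by
      rw [← Real.rpow_add hh0]; norm_num
    have h2 : |h| ^ (1 - γ) ≤ R ^ (1 - γ) :=
      Real.rpow_le_rpow (abs_nonneg h) hhR (by linarith)
    have h3 : R ^ γ * R ^ (1 - γ) = R := by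
      rw [← Real.rpow_add hR]; norm_num
    have key : R ^ γ * |h| ≤ R * |h| ^ γ := by
      calc R ^ γ * |h| = R ^ γ * (|h| ^ (1 - γ) * |h| ^ γ) := by rw [← h1]
        _ ≤ R ^ γ * (R ^ (1 - γ) * |h| ^ γ) :=
            mul_le_mul_of_nonneg_left
              (mul_le_mul_of_nonneg_right h2 hhpos.le)
              (Real.rpow_pos_of_pos hR γ).le
        _ = R * |h| ^ γ := by rw [← mul_assoc, h3]
    nlinarith [mul_pos hR hεpos]
  have habs := abs_le.mp hfd
  constructor
  · rw [hveq, Lplus_mul Λ α β ε c hcpos.le w x]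
    have h6 : -(Lf * |h|) ≤ Lplus Λ α β ε w x := by linarith [hell.2]
    have h7 : c * (-(Lf * |h|)) ≤ c * Lplus Λ α β ε w x :=
      mul_le_mul_of_nonneg_left h6 hcpos.le
    have h8 : c * |h| * Lf ≤ R * Lf := mul_le_mul_of_nonneg_right hchR hLf
    nlinarith
  · rw [hveq, Lminus_mul Λ α β ε c hcpos.le w x]
    have h6 : Lminus Λ α β ε w x ≤ Lf * |h| := by linarith [hell.1]
    have h7 : c * Lminus Λ α β ε w x ≤ c * (Lf * |h|) :=
      mul_le_mul_of_nonneg_left h6 hcpos.le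
    have h8 : c * |h| * Lf ≤ R * Lf := mul_le_mul_of_nonneg_right hchR hLf
    nlinarith
end
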